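/- arXiv:1305.5214 — 4 statements merged into one kernel-verified Lean document; each statement's English description precedes it below -/
import Mathlib

section
/- Let m > 0 and ψ(z) := −2mz/(1 + z²). Then for every z ∈ 𝔻: (m/2) · (|1 − z²|/|1 + z²|²) · (1 + |z|)(1 − |z|) ≤ d(ψ(z), E_m) ≤ 2m · (|1 − z²|/|1 + z²|²) · (1 + |z|)(1 − |z|). -/
open Metric

/-- The spectrum `(-∞,-m] ∪ [m,∞)` of the free Dirac operator, as a subset of `ℂ`. -/
def diracSpectrum (m : ℝ) : Set ℂ := {w : ℂ | w.im = 0 ∧ m ≤ |w.re|}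

private lemma keyUB (x y : ℝ) : y^2 ≤ ((1+x)^2+y^2)*((1-x)^2+y^2) := by
  nlinarith [sq_nonneg (1-x^2), sq_nonneg y, sq_nonneg (x*y), sq_nonneg (1-x^2+y^2-y),
    sq_nonneg (1-x^2+y^2+y)]

private lemma keyL2 (x y : ℝ) :
    ((1-x)^2+y^2)*(1-(x^2+y^2))^2 ≤ 4*((1+x)^2+y^2)*((1+x^2-y^2)^2+4*x^2*y^2) := by
  nlinarith [sq_nonneg ((1-x^2-y^2)*(1+x)), sq_nonneg ((1+x^2-y^2)*(1+x)), sq_nonneg (x*y),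
    sq_nonneg y, sq_nonneg (y*(1+x)), sq_nonneg ((1+x^2-y^2)*y), sq_nonneg (x*y*(1+x)),
    sq_nonneg ((1-x^2-y^2)*y), sq_nonneg (1+2*x+x^2-y^2),
    sq_nonneg ((1+x^2-y^2)-(1-x^2-y^2))]

private lemma keyL3 (x y : ℝ)
    (hc : (1+x^2-y^2)^2+4*x^2*y^2 ≤ 2*x*(1+x^2+y^2)) :
    ((1+x)^2+y^2)*((1-x)^2+y^2) ≤ 16*y^2 := by
  nlinarith [sq_nonneg (1-x), sq_nonneg (1-x^2-y^2), sq_nonneg (1-x^2+y^2), sq_nonneg (x*y),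
    sq_nonneg y, sq_nonneg (1-x+y), sq_nonneg (1-x-y),
    mul_nonneg (sub_nonneg.2 hc) (sq_nonneg y), mul_nonneg (sub_nonneg.2 hc) (sq_nonneg (1-x))]

private lemma keyUA (x y : ℝ) (hx : 0 ≤ x) (hs : x^2+y^2 ≤ 1)
    (hc : 2*x*(1+x^2+y^2) ≤ (1+x^2-y^2)^2+4*x^2*y^2) :
    ((1-x)^2+y^2)*((1+x^2-y^2)^2+4*x^2*y^2) ≤ 4*((1+x)^2+y^2)*(1-(x^2+y^2))^2 := by
  nlinarith [mul_nonneg (sub_nonneg.2 hc) (sub_nonneg.2 hs), mul_nonneg (sub_nonneg.2 hc) hx,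
    mul_nonneg (mul_nonneg (sub_nonneg.2 hc) hx) hx, sq_nonneg (1-x^2-y^2), sq_nonneg (x*y),
    sq_nonneg (y*(1-x)), sq_nonneg (y*(1+x)), mul_nonneg hx (sq_nonneg y),
    mul_nonneg hx (sq_nonneg (1-x^2-y^2)), sq_nonneg (1-x^2+y^2),
    mul_nonneg (sub_nonneg.2 hs) (sq_nonneg y), mul_nonneg (sub_nonneg.2 hs) (sq_nonneg (1-x))]

private lemma divhelp (m y t C : ℝ) : m^2*(16*y^2)*t^2/(4*C^2) = 4*m^2*y^2*t^2/C^2 := by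
  ring

private lemma sqhelp (m q C S X : ℝ) (hq : q^2 = X) :
    (m/2*(q/C)*(1-S))^2 = m^2*X*(1-S)^2/(4*C^2) := by rw [← hq]; ring

private lemma sqhelp2 (m q C S X : ℝ) (hq : q^2 = X) :
    (2*m*(q/C)*(1-S))^2 = 4*m^2*X*(1-S)^2/C^2 := by rw [← hq]; ring

set_option maxHeartbeats 1600000 in
/-- Koebe-type distortion bound for `ψ(z) = -2mz/(1+z²)`:
`(m/2)·(|1-z²|/|1+z²|²)·(1+|z|)(1-|z|) ≤ d(ψ(z), E_m) ≤ 2m·(|1-z²|/|1+z²|²)·(1+|z|)(1-|z|)`. -/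
theorem stmt4 (m : ℝ) (hm : 0 < m) :
    ∀ z ∈ ball (0 : ℂ) 1,
      m / 2 * (‖1 - z ^ 2‖ / ‖1 + z ^ 2‖ ^ 2) *
          ((1 + ‖z‖) * (1 - ‖z‖)) ≤
        infDist (-2 * m * z / (1 + z ^ 2)) (diracSpectrum m) ∧
      infDist (-2 * m * z / (1 + z ^ 2)) (diracSpectrum m) ≤
        2 * m * (‖1 - z ^ 2‖ / ‖1 + z ^ 2‖ ^ 2) *
          ((1 + ‖z‖) * (1 - ‖z‖)) := by
  intro z hz
  have hz1 : ‖z‖ < 1 := by simpa using hz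
  have hs1 : z.re^2 + z.im^2 < 1 := by
    have h1 := Complex.sq_norm z
    rw [Complex.normSq_apply] at h1
    nlinarith [norm_nonneg z]
  have h1s : (0:ℝ) ≤ 1 - (z.re^2+z.im^2) := by nlinarith
  have h1z : (1 : ℂ) + z^2 ≠ 0 := by
    intro h
    have hz2 : z^2 = -1 := by linear_combination h
    have h2 : Complex.normSq z ^ 2 = 1 := by rw [← map_pow, hz2]; simp
    rw [Complex.normSq_apply] at h2
    nlinarith
  have hC2 : Complex.normSq (1+z^2) = ((1+z.re^2-z.im^2)^2+4*z.re^2*z.im^2) := by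
    simp only [Complex.normSq_apply, Complex.add_re, Complex.add_im, Complex.one_re,
      Complex.one_im, pow_two, Complex.mul_re, Complex.mul_im]
    ring
  have hC2pos : (0:ℝ) < ((1+z.re^2-z.im^2)^2+4*z.re^2*z.im^2) := by
    rw [← hC2]; exact Complex.normSq_pos.2 h1z
  have hA2 : Complex.normSq (1+z) = ((1+z.re)^2+z.im^2) := by
    simp only [Complex.normSq_apply, Complex.add_re, Complex.add_im, Complex.one_re,
      Complex.one_im]
    ring
  have hB2 : Complex.normSq (1-z) = ((1-z.re)^2+z.im^2) := by
    simp only [Complex.normSq_apply, Complex.sub_re, Complex.sub_im, Complex.one_re,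
      Complex.one_im]
    ring
  have hA2pos : (0:ℝ) ≤ ((1+z.re)^2+z.im^2) := by positivity
  have hB2pos : (0:ℝ) ≤ ((1-z.re)^2+z.im^2) := by positivity
  set W : ℂ := -2 * (m:ℂ) * z / (1 + z ^ 2) with hWdef
  have hWre : W.re = -2*m*z.re*(1+(z.re^2+z.im^2)) / ((1+z.re^2-z.im^2)^2+4*z.re^2*z.im^2) := by
    rw [hWdef, Complex.div_re, hC2]
    simp [Complex.mul_re, Complex.mul_im, Complex.add_re, Complex.add_im, pow_two]
    ring
  have hWim : W.im = -2*m*z.im*(1-(z.re^2+z.im^2)) / ((1+z.re^2-z.im^2)^2+4*z.re^2*z.im^2) := by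
    rw [hWdef, Complex.div_im, hC2]
    simp [Complex.mul_re, Complex.mul_im, Complex.add_re, Complex.add_im, pow_two]
    ring
  have hsubm : Complex.normSq (W - (m:ℂ)) = m^2*((1+z.re)^2+z.im^2)^2 / ((1+z.re^2-z.im^2)^2+4*z.re^2*z.im^2) := by
    have hfac : W - (m:ℂ) = -(m:ℂ)*(1+z)^2/(1+z^2) := by
      rw [hWdef]; field_simp; ring
    rw [hfac, map_div₀, map_mul, map_pow, Complex.normSq_neg, Complex.normSq_ofReal, hA2, hC2]
    ring
  have haddm : Complex.normSq (W + (m:ℂ)) = m^2*((1-z.re)^2+z.im^2)^2 / ((1+z.re^2-z.im^2)^2+4*z.re^2*z.im^2) := by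
    have hfac : W + (m:ℂ) = (m:ℂ)*(1-z)^2/(1+z^2) := by
      rw [hWdef]; field_simp; ring
    rw [hfac, map_div₀, map_mul, map_pow, Complex.normSq_ofReal, hB2, hC2]
    ring
  have him2 : W.im^2 = 4*m^2*z.im^2*(1-(z.re^2+z.im^2))^2/((1+z.re^2-z.im^2)^2+4*z.re^2*z.im^2)^2 := by
    rw [hWim, div_pow]; ring
  have e1 : ‖1 - z^2‖ = Real.sqrt (((1+z.re)^2+z.im^2)*((1-z.re)^2+z.im^2)) := by
    have hfac : (1:ℂ) - z^2 = (1+z)*(1-z) := by ring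
    rw [hfac, norm_mul, Complex.norm_def, Complex.norm_def, hA2, hB2,
      ← Real.sqrt_mul hA2pos]
  have e2 : ‖1+z^2‖^2 = ((1+z.re^2-z.im^2)^2+4*z.re^2*z.im^2) := by rw [Complex.sq_norm, hC2]
  have e3 : (1 + ‖z‖) * (1 - ‖z‖) = 1 - (z.re^2+z.im^2) := by
    have habs2 : ‖z‖ ^2 = (z.re^2+z.im^2) := by rw [Complex.sq_norm, Complex.normSq_apply]; ring
    linear_combination -habs2
  have hsq : Real.sqrt (((1+z.re)^2+z.im^2)*((1-z.re)^2+z.im^2))^2 = ((1+z.re)^2+z.im^2)*((1-z.re)^2+z.im^2) :=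
    Real.sq_sqrt (by positivity)
  have hmemm : (m:ℂ) ∈ diracSpectrum m := by
    refine ⟨by simp, ?_⟩
    rw [Complex.ofReal_re]; exact le_abs_self m
  have hmemnm : (-(m:ℂ)) ∈ diracSpectrum m := by
    refine ⟨by simp, ?_⟩
    rw [Complex.neg_re, Complex.ofReal_re, abs_neg]; exact le_abs_self m
  have hne : (diracSpectrum m).Nonempty := ⟨(m:ℂ), hmemm⟩
  rw [e1, e2, e3]
  constructor
  · -- lower bound
    have hr0 : (0:ℝ) ≤ m / 2 * (Real.sqrt (((1+z.re)^2+z.im^2)*((1-z.re)^2+z.im^2)) / ((1+z.re^2-z.im^2)^2+4*z.re^2*z.im^2)) * (1 - (z.re^2+z.im^2)) :=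
      mul_nonneg (mul_nonneg (by positivity) (by positivity)) h1s
    have hr2 : (m / 2 * (Real.sqrt (((1+z.re)^2+z.im^2)*((1-z.re)^2+z.im^2)) / ((1+z.re^2-z.im^2)^2+4*z.re^2*z.im^2)) * (1 - (z.re^2+z.im^2)))^2
        = m^2*(((1+z.re)^2+z.im^2)*((1-z.re)^2+z.im^2))*(1-(z.re^2+z.im^2))^2/(4*((1+z.re^2-z.im^2)^2+4*z.re^2*z.im^2)^2) :=
      sqhelp _ _ _ _ _ hsq
    refine le_of_not_gt fun hlt => ?_
    obtain ⟨w, hwS, hwd⟩ := (Metric.infDist_lt_iff hne).1 hlt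
    obtain ⟨hw1, hw2⟩ := hwS
    refine absurd hwd (not_lt.2 ?_)
    rw [Complex.dist_eq, Complex.norm_def]
    rw [Real.le_sqrt hr0 (Complex.normSq_nonneg _)]
    have hnsq : Complex.normSq (W - w) = (W.re - w.re)^2 + W.im^2 := by
      rw [Complex.normSq_apply, Complex.sub_re, Complex.sub_im, hw1, sub_zero]; ring
    rw [hnsq, hr2]
    rcases le_abs.1 hw2 with ht | ht
    · rcases le_or_gt m W.re with hu | hu
      · -- W.re ≥ m : vertical bound
        have hcond : m * ((1+z.re^2-z.im^2)^2+4*z.re^2*z.im^2) ≤ -2*m*z.re*(1+(z.re^2+z.im^2)) := by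
          rw [hWre, le_div_iff₀ hC2pos] at hu
          linarith
        have hcond2 : ((1+z.re^2-z.im^2)^2+4*z.re^2*z.im^2) ≤ 2*(-z.re)*(1+(z.re^2+z.im^2)) := by
          have h' : m * ((1+z.re^2-z.im^2)^2+4*z.re^2*z.im^2) ≤ m * (2*(-z.re)*(1+(z.re^2+z.im^2))) := by linarith [hcond]
          exact le_of_mul_le_mul_left h' hm
        have key := keyL3 (-z.re) z.im (by linarith [hcond2])
        have key' : ((1+z.re)^2+z.im^2)*((1-z.re)^2+z.im^2) ≤ 16*z.im^2 := by linarith [key]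
        have hstep : m^2*(((1+z.re)^2+z.im^2)*((1-z.re)^2+z.im^2))*(1-(z.re^2+z.im^2))^2/(4*((1+z.re^2-z.im^2)^2+4*z.re^2*z.im^2)^2) ≤ W.im^2 := by
          calc m^2*(((1+z.re)^2+z.im^2)*((1-z.re)^2+z.im^2))*(1-(z.re^2+z.im^2))^2/(4*((1+z.re^2-z.im^2)^2+4*z.re^2*z.im^2)^2)
              ≤ m^2*(16*z.im^2)*(1-(z.re^2+z.im^2))^2/(4*((1+z.re^2-z.im^2)^2+4*z.re^2*z.im^2)^2) := by gcongr
            _ = 4*m^2*z.im^2*(1-(z.re^2+z.im^2))^2/((1+z.re^2-z.im^2)^2+4*z.re^2*z.im^2)^2 := divhelp m z.im (1-(z.re^2+z.im^2)) ((1+z.re^2-z.im^2)^2+4*z.re^2*z.im^2)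
            _ = W.im^2 := him2.symm
        linarith [hstep, sq_nonneg (W.re - w.re)]
      · -- W.re < m ≤ w.re : use point m
        have h6 : (W.re - m)^2 ≤ (W.re - w.re)^2 := by
          have h61 : (0:ℝ) ≤ m - W.re := by linarith
          have h62 : m - W.re ≤ w.re - W.re := by linarith
          calc (W.re - m)^2 = (m - W.re)^2 := by ring
            _ ≤ (w.re - W.re)^2 := pow_le_pow_left₀ h61 h62 2
            _ = (W.re - w.re)^2 := by ring
        have h8 : Complex.normSq (W - (m:ℂ)) = (W.re - m)^2 + W.im^2 := by
          rw [Complex.normSq_apply, Complex.sub_re, Complex.sub_im, Complex.ofReal_re,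
            Complex.ofReal_im, sub_zero]
          ring
        have h7 : (W.re - m)^2 + W.im^2 = m^2*((1+z.re)^2+z.im^2)^2 / ((1+z.re^2-z.im^2)^2+4*z.re^2*z.im^2) := by rw [← h8, hsubm]
        have hmain : m^2*(((1+z.re)^2+z.im^2)*((1-z.re)^2+z.im^2))*(1-(z.re^2+z.im^2))^2/(4*((1+z.re^2-z.im^2)^2+4*z.re^2*z.im^2)^2) ≤ m^2*((1+z.re)^2+z.im^2)^2 / ((1+z.re^2-z.im^2)^2+4*z.re^2*z.im^2) := by
          rw [div_le_div_iff₀ (by positivity) hC2pos]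
          calc m^2*(((1+z.re)^2+z.im^2)*((1-z.re)^2+z.im^2))*(1-(z.re^2+z.im^2))^2*((1+z.re^2-z.im^2)^2+4*z.re^2*z.im^2)
              = (m^2*((1+z.re)^2+z.im^2)*((1+z.re^2-z.im^2)^2+4*z.re^2*z.im^2))*(((1-z.re)^2+z.im^2)*(1-(z.re^2+z.im^2))^2) := by ring
            _ ≤ (m^2*((1+z.re)^2+z.im^2)*((1+z.re^2-z.im^2)^2+4*z.re^2*z.im^2))*(4*(((1+z.re)^2+z.im^2)*((1+z.re^2-z.im^2)^2+4*z.re^2*z.im^2))) :=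
                mul_le_mul_of_nonneg_left (by linarith [keyL2 z.re z.im]) (by positivity)
            _ = m^2*((1+z.re)^2+z.im^2)^2*(4*((1+z.re^2-z.im^2)^2+4*z.re^2*z.im^2)^2) := by ring
        linarith
    · rcases le_or_gt W.re (-m) with hu | hu
      · -- W.re ≤ -m : vertical bound
        have hcond : -2*m*z.re*(1+(z.re^2+z.im^2)) ≤ m * -((1+z.re^2-z.im^2)^2+4*z.re^2*z.im^2) := by
          rw [hWre, div_le_iff₀ hC2pos] at hu
          linarith
        have hcond2 : ((1+z.re^2-z.im^2)^2+4*z.re^2*z.im^2) ≤ 2*z.re*(1+(z.re^2+z.im^2)) := by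
          have h' : m * ((1+z.re^2-z.im^2)^2+4*z.re^2*z.im^2) ≤ m * (2*z.re*(1+(z.re^2+z.im^2))) := by linarith [hcond]
          exact le_of_mul_le_mul_left h' hm
        have key := keyL3 z.re z.im (by linarith [hcond2])
        have hstep : m^2*(((1+z.re)^2+z.im^2)*((1-z.re)^2+z.im^2))*(1-(z.re^2+z.im^2))^2/(4*((1+z.re^2-z.im^2)^2+4*z.re^2*z.im^2)^2) ≤ W.im^2 := by
          calc m^2*(((1+z.re)^2+z.im^2)*((1-z.re)^2+z.im^2))*(1-(z.re^2+z.im^2))^2/(4*((1+z.re^2-z.im^2)^2+4*z.re^2*z.im^2)^2)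
              ≤ m^2*(16*z.im^2)*(1-(z.re^2+z.im^2))^2/(4*((1+z.re^2-z.im^2)^2+4*z.re^2*z.im^2)^2) := by gcongr
            _ = 4*m^2*z.im^2*(1-(z.re^2+z.im^2))^2/((1+z.re^2-z.im^2)^2+4*z.re^2*z.im^2)^2 := divhelp m z.im (1-(z.re^2+z.im^2)) ((1+z.re^2-z.im^2)^2+4*z.re^2*z.im^2)
            _ = W.im^2 := him2.symm
        linarith [hstep, sq_nonneg (W.re - w.re)]
      · -- w.re ≤ -m < W.re : use point -m
        have h6 : (W.re + m)^2 ≤ (W.re - w.re)^2 := by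
          have h61 : (0:ℝ) ≤ W.re + m := by linarith
          have h62 : W.re + m ≤ W.re - w.re := by linarith
          exact pow_le_pow_left₀ h61 h62 2
        have h8 : Complex.normSq (W + (m:ℂ)) = (W.re + m)^2 + W.im^2 := by
          rw [Complex.normSq_apply, Complex.add_re, Complex.add_im, Complex.ofReal_re,
            Complex.ofReal_im, add_zero]
          ring
        have h7 : (W.re + m)^2 + W.im^2 = m^2*((1-z.re)^2+z.im^2)^2 / ((1+z.re^2-z.im^2)^2+4*z.re^2*z.im^2) := by rw [← h8, haddm]
        have hmain : m^2*(((1+z.re)^2+z.im^2)*((1-z.re)^2+z.im^2))*(1-(z.re^2+z.im^2))^2/(4*((1+z.re^2-z.im^2)^2+4*z.re^2*z.im^2)^2) ≤ m^2*((1-z.re)^2+z.im^2)^2 / ((1+z.re^2-z.im^2)^2+4*z.re^2*z.im^2) := by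
          rw [div_le_div_iff₀ (by positivity) hC2pos]
          calc m^2*(((1+z.re)^2+z.im^2)*((1-z.re)^2+z.im^2))*(1-(z.re^2+z.im^2))^2*((1+z.re^2-z.im^2)^2+4*z.re^2*z.im^2)
              = (m^2*((1-z.re)^2+z.im^2)*((1+z.re^2-z.im^2)^2+4*z.re^2*z.im^2))*(((1+z.re)^2+z.im^2)*(1-(z.re^2+z.im^2))^2) := by ring
            _ ≤ (m^2*((1-z.re)^2+z.im^2)*((1+z.re^2-z.im^2)^2+4*z.re^2*z.im^2))*(4*(((1-z.re)^2+z.im^2)*((1+z.re^2-z.im^2)^2+4*z.re^2*z.im^2))) :=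
                mul_le_mul_of_nonneg_left (by linarith [keyL2 (-z.re) z.im]) (by positivity)
            _ = m^2*((1-z.re)^2+z.im^2)^2*(4*((1+z.re^2-z.im^2)^2+4*z.re^2*z.im^2)^2) := by ring
        linarith
  · -- upper bound
    have hR0 : (0:ℝ) ≤ 2*m*(Real.sqrt (((1+z.re)^2+z.im^2)*((1-z.re)^2+z.im^2)) / ((1+z.re^2-z.im^2)^2+4*z.re^2*z.im^2)) * (1 - (z.re^2+z.im^2)) :=
      mul_nonneg (mul_nonneg (by positivity) (by positivity)) h1s
    have hR2 : (2*m*(Real.sqrt (((1+z.re)^2+z.im^2)*((1-z.re)^2+z.im^2)) / ((1+z.re^2-z.im^2)^2+4*z.re^2*z.im^2)) * (1 - (z.re^2+z.im^2)))^2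
        = 4*m^2*(((1+z.re)^2+z.im^2)*((1-z.re)^2+z.im^2))*(1-(z.re^2+z.im^2))^2/((1+z.re^2-z.im^2)^2+4*z.re^2*z.im^2)^2 :=
      sqhelp2 _ _ _ _ _ hsq
    rcases le_total z.re 0 with hxn | hxp
    · rcases le_total (2*(-z.re)*(1+(z.re^2+z.im^2))) ((1+z.re^2-z.im^2)^2+4*z.re^2*z.im^2) with hcA | hcB
      · -- case A, x ≤ 0 : use point m
        refine le_trans (Metric.infDist_le_dist_of_mem hmemm) ?_
        rw [Complex.dist_eq, Complex.norm_def]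
        have hkey : Complex.normSq (W - (m:ℂ))
            ≤ (2*m*(Real.sqrt (((1+z.re)^2+z.im^2)*((1-z.re)^2+z.im^2)) / ((1+z.re^2-z.im^2)^2+4*z.re^2*z.im^2)) * (1 - (z.re^2+z.im^2)))^2 := by
          rw [hsubm, hR2, div_le_div_iff₀ hC2pos (by positivity)]
          have key : ((1+z.re)^2+z.im^2)*((1+z.re^2-z.im^2)^2+4*z.re^2*z.im^2) ≤ 4*(((1-z.re)^2+z.im^2)*(1-(z.re^2+z.im^2))^2) := by
            have k := keyUA (-z.re) z.im (by linarith) (by linarith [hs1]) (by linarith [hcA])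
            linarith [k]
          calc m^2*((1+z.re)^2+z.im^2)^2*((1+z.re^2-z.im^2)^2+4*z.re^2*z.im^2)^2 = (m^2*((1+z.re)^2+z.im^2)*((1+z.re^2-z.im^2)^2+4*z.re^2*z.im^2))*(((1+z.re)^2+z.im^2)*((1+z.re^2-z.im^2)^2+4*z.re^2*z.im^2)) := by ring
            _ ≤ (m^2*((1+z.re)^2+z.im^2)*((1+z.re^2-z.im^2)^2+4*z.re^2*z.im^2))*(4*(((1-z.re)^2+z.im^2)*(1-(z.re^2+z.im^2))^2)) :=
                mul_le_mul_of_nonneg_left key (by positivity)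
            _ = 4*m^2*(((1+z.re)^2+z.im^2)*((1-z.re)^2+z.im^2))*(1-(z.re^2+z.im^2))^2*((1+z.re^2-z.im^2)^2+4*z.re^2*z.im^2) := by ring
        calc Real.sqrt (Complex.normSq (W - (m:ℂ)))
            ≤ Real.sqrt ((2*m*(Real.sqrt (((1+z.re)^2+z.im^2)*((1-z.re)^2+z.im^2)) / ((1+z.re^2-z.im^2)^2+4*z.re^2*z.im^2)) * (1 - (z.re^2+z.im^2)))^2) :=
              Real.sqrt_le_sqrt hkey
          _ = 2*m*(Real.sqrt (((1+z.re)^2+z.im^2)*((1-z.re)^2+z.im^2)) / ((1+z.re^2-z.im^2)^2+4*z.re^2*z.im^2)) * (1 - (z.re^2+z.im^2)) := Real.sqrt_sq hR0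
      · -- case B, x ≤ 0 : W.re ≥ m, use point (W.re, 0)
        have hWrem : m ≤ W.re := by
          rw [hWre, le_div_iff₀ hC2pos]
          have h' := mul_le_mul_of_nonneg_left hcB hm.le
          linarith [h']
        have hmemW : ((W.re : ℂ)) ∈ diracSpectrum m := by
          refine ⟨by simp, ?_⟩
          rw [Complex.ofReal_re]
          exact le_trans hWrem (le_abs_self _)
        refine le_trans (Metric.infDist_le_dist_of_mem hmemW) ?_
        rw [Complex.dist_eq, Complex.norm_def]
        have hnsq : Complex.normSq (W - (W.re:ℂ)) = W.im^2 := by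
          rw [Complex.normSq_apply, Complex.sub_re, Complex.sub_im, Complex.ofReal_re,
            Complex.ofReal_im, sub_self, sub_zero]
          ring
        rw [hnsq]
        have hkey : W.im^2 ≤ (2*m*(Real.sqrt (((1+z.re)^2+z.im^2)*((1-z.re)^2+z.im^2)) / ((1+z.re^2-z.im^2)^2+4*z.re^2*z.im^2)) * (1 - (z.re^2+z.im^2)))^2 := by
          rw [him2, hR2, div_le_div_iff₀ (by positivity) (by positivity)]
          calc 4*m^2*z.im^2*(1-(z.re^2+z.im^2))^2*((1+z.re^2-z.im^2)^2+4*z.re^2*z.im^2)^2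
              = (4*m^2*(1-(z.re^2+z.im^2))^2*((1+z.re^2-z.im^2)^2+4*z.re^2*z.im^2)^2)*(z.im^2) := by ring
            _ ≤ (4*m^2*(1-(z.re^2+z.im^2))^2*((1+z.re^2-z.im^2)^2+4*z.re^2*z.im^2)^2)*(((1+z.re)^2+z.im^2)*((1-z.re)^2+z.im^2)) :=
                mul_le_mul_of_nonneg_left (keyUB z.re z.im) (by positivity)
            _ = 4*m^2*(((1+z.re)^2+z.im^2)*((1-z.re)^2+z.im^2))*(1-(z.re^2+z.im^2))^2*((1+z.re^2-z.im^2)^2+4*z.re^2*z.im^2)^2 := by ring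
        calc Real.sqrt (W.im^2)
            ≤ Real.sqrt ((2*m*(Real.sqrt (((1+z.re)^2+z.im^2)*((1-z.re)^2+z.im^2)) / ((1+z.re^2-z.im^2)^2+4*z.re^2*z.im^2)) * (1 - (z.re^2+z.im^2)))^2) :=
              Real.sqrt_le_sqrt hkey
          _ = 2*m*(Real.sqrt (((1+z.re)^2+z.im^2)*((1-z.re)^2+z.im^2)) / ((1+z.re^2-z.im^2)^2+4*z.re^2*z.im^2)) * (1 - (z.re^2+z.im^2)) := Real.sqrt_sq hR0
    · rcases le_total (2*z.re*(1+(z.re^2+z.im^2))) ((1+z.re^2-z.im^2)^2+4*z.re^2*z.im^2) with hcA | hcB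
      · -- case A, x ≥ 0 : use point -m
        refine le_trans (Metric.infDist_le_dist_of_mem hmemnm) ?_
        rw [Complex.dist_eq, Complex.norm_def]
        have hsub : W - (-(m:ℂ)) = W + (m:ℂ) := by ring
        rw [hsub]
        have hkey : Complex.normSq (W + (m:ℂ))
            ≤ (2*m*(Real.sqrt (((1+z.re)^2+z.im^2)*((1-z.re)^2+z.im^2)) / ((1+z.re^2-z.im^2)^2+4*z.re^2*z.im^2)) * (1 - (z.re^2+z.im^2)))^2 := by
          rw [haddm, hR2, div_le_div_iff₀ hC2pos (by positivity)]
          have key : ((1-z.re)^2+z.im^2)*((1+z.re^2-z.im^2)^2+4*z.re^2*z.im^2) ≤ 4*((1+z.re)^2+z.im^2)*(1-(z.re^2+z.im^2))^2 :=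
            keyUA z.re z.im hxp hs1.le (by linarith [hcA])
          calc m^2*((1-z.re)^2+z.im^2)^2*((1+z.re^2-z.im^2)^2+4*z.re^2*z.im^2)^2 = (m^2*((1-z.re)^2+z.im^2)*((1+z.re^2-z.im^2)^2+4*z.re^2*z.im^2))*(((1-z.re)^2+z.im^2)*((1+z.re^2-z.im^2)^2+4*z.re^2*z.im^2)) := by ring
            _ ≤ (m^2*((1-z.re)^2+z.im^2)*((1+z.re^2-z.im^2)^2+4*z.re^2*z.im^2))*(4*((1+z.re)^2+z.im^2)*(1-(z.re^2+z.im^2))^2) :=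
                mul_le_mul_of_nonneg_left key (by positivity)
            _ = 4*m^2*(((1+z.re)^2+z.im^2)*((1-z.re)^2+z.im^2))*(1-(z.re^2+z.im^2))^2*((1+z.re^2-z.im^2)^2+4*z.re^2*z.im^2) := by ring
        calc Real.sqrt (Complex.normSq (W + (m:ℂ)))
            ≤ Real.sqrt ((2*m*(Real.sqrt (((1+z.re)^2+z.im^2)*((1-z.re)^2+z.im^2)) / ((1+z.re^2-z.im^2)^2+4*z.re^2*z.im^2)) * (1 - (z.re^2+z.im^2)))^2) :=
              Real.sqrt_le_sqrt hkey
          _ = 2*m*(Real.sqrt (((1+z.re)^2+z.im^2)*((1-z.re)^2+z.im^2)) / ((1+z.re^2-z.im^2)^2+4*z.re^2*z.im^2)) * (1 - (z.re^2+z.im^2)) := Real.sqrt_sq hR0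
      · -- case B, x ≥ 0 : W.re ≤ -m, use point (W.re, 0)
        have hWrem : W.re ≤ -m := by
          rw [hWre, div_le_iff₀ hC2pos]
          have h' := mul_le_mul_of_nonneg_left hcB hm.le
          linarith [h']
        have hmemW : ((W.re : ℂ)) ∈ diracSpectrum m := by
          refine ⟨by simp, ?_⟩
          rw [Complex.ofReal_re]
          rw [abs_of_nonpos (by linarith)]
          linarith
        refine le_trans (Metric.infDist_le_dist_of_mem hmemW) ?_
        rw [Complex.dist_eq, Complex.norm_def]
        have hnsq : Complex.normSq (W - (W.re:ℂ)) = W.im^2 := by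
          rw [Complex.normSq_apply, Complex.sub_re, Complex.sub_im, Complex.ofReal_re,
            Complex.ofReal_im, sub_self, sub_zero]
          ring
        rw [hnsq]
        have hkey : W.im^2 ≤ (2*m*(Real.sqrt (((1+z.re)^2+z.im^2)*((1-z.re)^2+z.im^2)) / ((1+z.re^2-z.im^2)^2+4*z.re^2*z.im^2)) * (1 - (z.re^2+z.im^2)))^2 := by
          rw [him2, hR2, div_le_div_iff₀ (by positivity) (by positivity)]
          calc 4*m^2*z.im^2*(1-(z.re^2+z.im^2))^2*((1+z.re^2-z.im^2)^2+4*z.re^2*z.im^2)^2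
              = (4*m^2*(1-(z.re^2+z.im^2))^2*((1+z.re^2-z.im^2)^2+4*z.re^2*z.im^2)^2)*(z.im^2) := by ring
            _ ≤ (4*m^2*(1-(z.re^2+z.im^2))^2*((1+z.re^2-z.im^2)^2+4*z.re^2*z.im^2)^2)*(((1+z.re)^2+z.im^2)*((1-z.re)^2+z.im^2)) :=
                mul_le_mul_of_nonneg_left (keyUB z.re z.im) (by positivity)
            _ = 4*m^2*(((1+z.re)^2+z.im^2)*((1-z.re)^2+z.im^2))*(1-(z.re^2+z.im^2))^2*((1+z.re^2-z.im^2)^2+4*z.re^2*z.im^2)^2 := by ring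
        calc Real.sqrt (W.im^2)
            ≤ Real.sqrt ((2*m*(Real.sqrt (((1+z.re)^2+z.im^2)*((1-z.re)^2+z.im^2)) / ((1+z.re^2-z.im^2)^2+4*z.re^2*z.im^2)) * (1 - (z.re^2+z.im^2)))^2) :=
              Real.sqrt_le_sqrt hkey
          _ = 2*m*(Real.sqrt (((1+z.re)^2+z.im^2)*((1-z.re)^2+z.im^2)) / ((1+z.re^2-z.im^2)^2+4*z.re^2*z.im^2)) * (1 - (z.re^2+z.im^2)) := Real.sqrt_sq hR0
end

section
/- Let m > 0, ψ(z) := −2mz/(1 + z²), and let u(z) := e^{iθ}(z − z_b)/(1 − \overline{z_b} z) be a disc automorphism with z_b ∈ 𝔻, θ ∈ ℝ. Then there exist constants C_1, C_2 > 0, depending only on m and z_b, such that for every z ∈ 𝔻: C_1 · Q(z) ≤ d(ψ(z), E_m) ≤ C_2 · Q(z), where Q(z) := ( |u(z) − u(1)| · |u(z) − u(−1)| / ( |u(z) − u(i)|² · |u(z) − u(−i)|² ) ) · (1 − |u(z)|). -/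
open Metric

open Complex in
lemma dirac_ne (m : ℝ) (hm : 0 < m) : (diracSpectrum m).Nonempty :=
  ⟨(m : ℂ), by simp [diracSpectrum, _root_.abs_of_pos hm]⟩

lemma infDist_ge (m : ℝ) (hm : 0 < m) (w : ℂ) :
    (max (m - |w.re|) 0 + |w.im|) / 2 ≤ infDist w (diracSpectrum m) := by
  by_contra h
  push_neg at h
  rw [infDist_lt_iff (dirac_ne m hm)] at h
  obtain ⟨p, ⟨hpim, hpre⟩, hd⟩ := h
  have h1 : |w.im| ≤ dist w p := by
    have := Complex.abs_im_le_norm (w - p)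
    simpa [Complex.dist_eq, hpim] using this
  have h2 : max (m - |w.re|) 0 ≤ dist w p := by
    rw [max_le_iff]
    refine ⟨?_, dist_nonneg⟩
    have := Complex.abs_re_le_norm (w - p)
    have h3 : |w.re - p.re| ≤ dist w p := by simpa [Complex.dist_eq] using this
    have h4 : |p.re| - |w.re| ≤ |w.re - p.re| := by
      have := abs_sub_abs_le_abs_sub p.re w.re
      rw [abs_sub_comm] at this
      linarith
    linarith
  linarith

lemma infDist_le' (m : ℝ) (hm : 0 < m) (w : ℂ) :
    infDist w (diracSpectrum m) ≤ max (m - |w.re|) 0 + |w.im| := by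
  rcases le_or_gt 0 w.re with hr | hr
  · have hmem : ((max m w.re : ℝ) : ℂ) ∈ diracSpectrum m := by
      constructor
      · simp
      · simp only [Complex.ofReal_re]
        rw [_root_.abs_of_nonneg (le_trans hm.le (le_max_left _ _))]
        exact le_max_left _ _
    refine le_trans (infDist_le_dist_of_mem hmem) ?_
    rw [Complex.dist_eq]
    refine le_trans (Complex.norm_le_abs_re_add_abs_im _) ?_
    have : |w.re - (max m w.re : ℝ)| = max (m - |w.re|) 0 := by
      rw [_root_.abs_of_nonpos (by simp [le_max_iff]), _root_.abs_of_nonneg hr]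
      rcases le_total m w.re with h | h
      · simp [max_eq_right h, max_eq_right (by linarith : m - w.re ≤ 0)]
      · simp [max_eq_left h, max_eq_left (by linarith : (0:ℝ) ≤ m - w.re)]
    simp only [Complex.sub_re, Complex.sub_im, Complex.ofReal_re, Complex.ofReal_im, sub_zero]
    rw [this]
  · have hmem : ((-(max m (-w.re)) : ℝ) : ℂ) ∈ diracSpectrum m := by
      constructor
      · simp
      · simp only [Complex.ofReal_re]
        rw [abs_neg, _root_.abs_of_nonneg (le_trans hm.le (le_max_left _ _))]
        exact le_max_left _ _
    refine le_trans (infDist_le_dist_of_mem hmem) ?_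
    rw [Complex.dist_eq]
    refine le_trans (Complex.norm_le_abs_re_add_abs_im _) ?_
    have : |w.re - ((-(max m (-w.re)) : ℝ))| = max (m - |w.re|) 0 := by
      rw [_root_.abs_of_neg hr]
      rcases le_total m (-w.re) with h | h
      · rw [max_eq_right h, max_eq_right (by linarith : m - -w.re ≤ 0)]
        simp
      · rw [max_eq_left h, max_eq_left (by linarith : (0:ℝ) ≤ m - -w.re)]
        rw [_root_.abs_of_nonneg (by linarith)]
        ring
    simp only [Complex.sub_re, Complex.sub_im, Complex.ofReal_re, Complex.ofReal_im, sub_zero]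
    rw [this]

section Psi
open Complex
lemma re_psi (m : ℝ) (z : ℂ) :
    (-2 * (m:ℂ) * z / (1 + z ^ 2)).re
      = -2 * m * (1 + (z.re^2 + z.im^2)) * z.re / Complex.normSq (1 + z^2) := by
  rw [Complex.div_re, ← add_div]
  congr 1
  simp [Complex.mul_re, Complex.mul_im, pow_two]
  ring

lemma im_psi (m : ℝ) (z : ℂ) :
    (-2 * (m:ℂ) * z / (1 + z ^ 2)).im
      = -2 * m * (1 - (z.re^2 + z.im^2)) * z.im / Complex.normSq (1 + z^2) := by
  rw [Complex.div_im, ← sub_div]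
  congr 1
  simp [Complex.mul_re, Complex.mul_im, pow_two]
  ring

lemma normSq_key (z : ℂ) :
    Complex.normSq (1 + z^2) = (1 - (z.re^2 + z.im^2))^2 + 4 * z.re^2 := by
  simp [Complex.normSq_apply, pow_two, Complex.mul_re, Complex.mul_im]
  ring

lemma normSq_key2 (z : ℂ) :
    Complex.normSq (1 - z^2) = (1 - (z.re^2 + z.im^2))^2 + 4 * z.im^2 := by
  simp [Complex.normSq_apply, pow_two, Complex.mul_re, Complex.mul_im]
  ring

end Psi
-- f(s) = (1-r^2)^2 + 4 s^2 - 2 (1+r^2) s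
lemma RL1 (r s : ℝ) (hs : 0 ≤ s) (hsr : s ≤ r) (hr : r ≤ 1) :
    (1 - r^2)^2 + 4*s^2 - 2*(1+r^2)*s ≤ 4*(1-r)^2 := by
  nlinarith [mul_nonneg hs (sub_nonneg.2 hsr), mul_nonneg (sub_nonneg.2 hsr) (sub_nonneg.2 hr),
    sq_nonneg (r - s), sq_nonneg (r + s - 1), mul_nonneg hs (sub_nonneg.2 hr)]

lemma RL2 (r s t : ℝ) (hs : 0 ≤ s) (ht : 0 ≤ t) (hst : s^2 + t^2 = r^2)
    (hr0 : 0 ≤ r) (hr : r ≤ 1) :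
    (1-r)^2/8 ≤ max ((1 - r^2)^2 + 4*s^2 - 2*(1+r^2)*s) 0 + (1-r)*t := by
  rcases le_or_gt ((1-r)/8) t with h | h
  · have : (1-r)^2/8 ≤ (1-r)*t := by nlinarith [sub_nonneg.2 hr]
    have := le_max_right ((1 - r^2)^2 + 4*s^2 - 2*(1+r^2)*s) 0
    linarith
  · have hsr : s ≤ r := by nlinarith
    have key : (1-r)^2/8 ≤ (1 - r^2)^2 + 4*s^2 - 2*(1+r^2)*s := by
      rcases le_or_gt (4*(s+r) - 2 - 2*r^2) 0 with hc | hc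
      · -- f(s) = (1+r^2)(1-r)^2 - (r-s)*c ≥ (1-r)^2
        nlinarith [mul_nonneg (sub_nonneg.2 hsr) (neg_nonneg.2 hc), sq_nonneg (1-r)]
      · -- c > 0 : s + r > 1/2, r - s = t^2/(r+s) ≤ 2 t^2
        have hrs2 : (1:ℝ)/2 < s + r := by nlinarith
        have hrs : r - s ≤ 2*t^2 := by
          have : (r-s)*(r+s) = t^2 := by nlinarith
          nlinarith
        have hc6 : 4*(s+r) - 2 - 2*r^2 ≤ 6 := by nlinarith
        have ht8 : t ≤ (1-r)/8 := h.le
        -- (r-s)*c ≤ 12 t^2 ≤ 12 (1-r)^2/64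
        nlinarith [mul_le_mul hrs hc6 (by linarith) (by positivity),
          mul_le_mul ht8 ht8 ht (by linarith), sq_nonneg (1-r)]
    have := le_max_left ((1 - r^2)^2 + 4*s^2 - 2*(1+r^2)*s) 0
    have htnn : 0 ≤ (1-r)*t := mul_nonneg (by linarith) ht
    linarith

section Mob
variable (zb : ℂ) (hzb : ‖zb‖ < 1) (θ : ℝ) (u : ℂ → ℂ)
  (hu : ∀ z : ℂ, u z = Complex.exp (θ * Complex.I) * (z - zb) / (1 - (starRingEnd ℂ) zb * z))

include hzb in
lemma denom_lb {w : ℂ} (hw : ‖w‖ ≤ 1) :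
    1 - ‖zb‖ ≤ ‖1 - (starRingEnd ℂ) zb * w‖ := by
  have h1 : ‖(starRingEnd ℂ) zb * w‖ ≤ ‖zb‖ := by
    rw [norm_mul, Complex.norm_conj]
    calc ‖zb‖ * ‖w‖ ≤ ‖zb‖ * 1 :=
          mul_le_mul_of_nonneg_left hw (norm_nonneg _)
      _ = ‖zb‖ := mul_one _
  calc 1 - ‖zb‖ ≤ 1 - ‖(starRingEnd ℂ) zb * w‖ := by linarith
    _ = ‖(1:ℂ)‖ - ‖(starRingEnd ℂ) zb * w‖ := by rw [norm_one]
    _ ≤ ‖1 - (starRingEnd ℂ) zb * w‖ :=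
        le_trans (le_abs_self _) (abs_norm_sub_norm_le _ _)

lemma denom_ub {w : ℂ} (hw : ‖w‖ ≤ 1) :
    ‖1 - (starRingEnd ℂ) zb * w‖ ≤ 1 + ‖zb‖ := by
  refine le_trans (norm_sub_le _ _) ?_
  simp only [norm_one]
  rw [norm_mul, Complex.norm_conj]
  nlinarith [norm_nonneg zb, norm_nonneg w]

include hzb in
lemma denom_ne {w : ℂ} (hw : ‖w‖ ≤ 1) :
    1 - (starRingEnd ℂ) zb * w ≠ 0 := by
  intro h
  have := denom_lb zb hzb hw
  rw [h] at this
  simp at this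
  linarith

include hzb hu in
lemma mob_diff {z w : ℂ} (hz : ‖z‖ ≤ 1) (hw : ‖w‖ ≤ 1) :
    u z - u w = Complex.exp (θ * Complex.I) * ((z - w) * (1 - (starRingEnd ℂ) zb * zb)) /
      ((1 - (starRingEnd ℂ) zb * z) * (1 - (starRingEnd ℂ) zb * w)) := by
  rw [hu z, hu w]
  rw [div_sub_div _ _ (denom_ne zb hzb hz) (denom_ne zb hzb hw)]
  ring

include hzb hu in
lemma mob_diff_abs {z w : ℂ} (hz : ‖z‖ ≤ 1) (hw : ‖w‖ ≤ 1) :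
    ‖u z - u w‖ = ‖z - w‖ * (1 - Complex.normSq zb) /
      (‖1 - (starRingEnd ℂ) zb * z‖ * ‖1 - (starRingEnd ℂ) zb * w‖) := by
  rw [mob_diff zb hzb θ u hu hz hw, norm_div, norm_mul, norm_mul, norm_mul,
    Complex.norm_exp_ofReal_mul_I, one_mul]
  congr 2
  have : (starRingEnd ℂ) zb * zb = (Complex.normSq zb : ℂ) := by
    rw [mul_comm]; exact Complex.mul_conj zb
  rw [this]
  rw [← Complex.ofReal_one, ← Complex.ofReal_sub, Complex.norm_real, Real.norm_eq_abs]
  rw [_root_.abs_of_nonneg]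
  nlinarith [Complex.sq_norm zb, norm_nonneg zb]

include hzb hu in
lemma mob_lb {z w : ℂ} (hz : ‖z‖ ≤ 1) (hw : ‖w‖ ≤ 1) :
    (1 - Complex.normSq zb) / (1 + ‖zb‖)^2 * ‖z - w‖
      ≤ ‖u z - u w‖ := by
  rw [mob_diff_abs zb hzb θ u hu hz hw]
  have hnsq : Complex.normSq zb < 1 := by
    rw [← Complex.sq_norm]; nlinarith [norm_nonneg zb]
  have h1 := denom_ub zb hz
  have h2 := denom_ub zb hw
  have hd1 : 0 < ‖1 - (starRingEnd ℂ) zb * z‖ :=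
    norm_pos_iff.mpr (denom_ne zb hzb hz)
  have hd2 : 0 < ‖1 - (starRingEnd ℂ) zb * w‖ :=
    norm_pos_iff.mpr (denom_ne zb hzb hw)
  rw [div_mul_eq_mul_div, div_le_div_iff₀ (by positivity) (by positivity)]
  have habs : (0:ℝ) ≤ ‖z - w‖ := norm_nonneg _
  have hA : ‖1 - (starRingEnd ℂ) zb * z‖ * ‖1 - (starRingEnd ℂ) zb * w‖
      ≤ (1 + ‖zb‖)^2 := by
    nlinarith [mul_le_mul h1 h2 hd2.le (by positivity : (0:ℝ) ≤ 1 + ‖zb‖)]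
  have hX : (0:ℝ) ≤ (1 - Complex.normSq zb) * ‖z - w‖ :=
    mul_nonneg (by linarith) habs
  calc (1 - Complex.normSq zb) * ‖z - w‖ *
        (‖1 - (starRingEnd ℂ) zb * z‖ * ‖1 - (starRingEnd ℂ) zb * w‖)
      ≤ (1 - Complex.normSq zb) * ‖z - w‖ * (1 + ‖zb‖)^2 :=
        mul_le_mul_of_nonneg_left hA hX
    _ = ‖z - w‖ * (1 - Complex.normSq zb) * (1 + ‖zb‖)^2 := by ring

include hzb hu in
lemma mob_ub {z w : ℂ} (hz : ‖z‖ ≤ 1) (hw : ‖w‖ ≤ 1) :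
    ‖u z - u w‖
      ≤ (1 - Complex.normSq zb) / (1 - ‖zb‖)^2 * ‖z - w‖ := by
  rw [mob_diff_abs zb hzb θ u hu hz hw]
  have hnsq : Complex.normSq zb < 1 := by
    rw [← Complex.sq_norm]; nlinarith [norm_nonneg zb]
  have h1 := denom_lb zb hzb hz
  have h2 := denom_lb zb hzb hw
  have hd1 : 0 < ‖1 - (starRingEnd ℂ) zb * z‖ :=
    norm_pos_iff.mpr (denom_ne zb hzb hz)
  have hd2 : 0 < ‖1 - (starRingEnd ℂ) zb * w‖ :=
    norm_pos_iff.mpr (denom_ne zb hzb hw)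
  rw [div_mul_eq_mul_div, div_le_div_iff₀ (by positivity) (pow_pos (by linarith) 2)]
  have habs : (0:ℝ) ≤ ‖z - w‖ := norm_nonneg _
  have hA : (1 - ‖zb‖)^2
      ≤ ‖1 - (starRingEnd ℂ) zb * z‖ * ‖1 - (starRingEnd ℂ) zb * w‖ := by
    nlinarith [mul_le_mul h1 h2 (by linarith : (0:ℝ) ≤ 1 - ‖zb‖) hd1.le]
  have hX : (0:ℝ) ≤ (1 - Complex.normSq zb) * ‖z - w‖ :=
    mul_nonneg (by linarith) habs
  calc ‖z - w‖ * (1 - Complex.normSq zb) * (1 - ‖zb‖)^2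
      = (1 - Complex.normSq zb) * ‖z - w‖ * (1 - ‖zb‖)^2 := by ring
    _ ≤ (1 - Complex.normSq zb) * ‖z - w‖ *
        (‖1 - (starRingEnd ℂ) zb * z‖ * ‖1 - (starRingEnd ℂ) zb * w‖) :=
        mul_le_mul_of_nonneg_left hA hX

end Mob

lemma normSq_mob_identity (zb z : ℂ) :
    Complex.normSq (1 - (starRingEnd ℂ) zb * z) - Complex.normSq (z - zb)
      = (1 - Complex.normSq z) * (1 - Complex.normSq zb) := by
  simp [Complex.normSq_apply, Complex.sub_re, Complex.sub_im, Complex.mul_re, Complex.mul_im,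
    Complex.one_re, Complex.one_im, Complex.conj_re, Complex.conj_im]
  ring

section Mob2
variable (zb : ℂ) (hzb : ‖zb‖ < 1) (θ : ℝ) (u : ℂ → ℂ)
  (hu : ∀ z : ℂ, u z = Complex.exp (θ * Complex.I) * (z - zb) / (1 - (starRingEnd ℂ) zb * z))

include hu in
lemma abs_u (z : ℂ) :
    ‖u z‖ = ‖z - zb‖ / ‖1 - (starRingEnd ℂ) zb * z‖ := by
  rw [hu z, norm_div, norm_mul, Complex.norm_exp_ofReal_mul_I, one_mul]

include hzb hu in
lemma mob_key {z : ℂ} (hz : ‖z‖ ≤ 1) :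
    (1 - ‖u z‖ ^ 2) * ‖1 - (starRingEnd ℂ) zb * z‖ ^ 2
      = (1 - ‖z‖ ^ 2) * (1 - ‖zb‖ ^ 2) := by
  have hd : ‖1 - (starRingEnd ℂ) zb * z‖ ≠ 0 := by
    have := denom_lb zb hzb hz
    intro h; rw [h] at this; linarith
  have h1 : ‖u z‖ ^ 2 * ‖1 - (starRingEnd ℂ) zb * z‖ ^ 2
      = ‖z - zb‖ ^ 2 := by
    rw [abs_u zb θ u hu z]
    rw [div_pow, div_mul_cancel₀ _ (pow_ne_zero 2 hd)]
  have h2 := normSq_mob_identity zb z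
  rw [← Complex.sq_norm, ← Complex.sq_norm (z - zb), ← Complex.sq_norm z, ← Complex.sq_norm zb] at h2
  nlinarith [h1, h2]

include hzb hu in
lemma absu_le_one {z : ℂ} (hz : ‖z‖ ≤ 1) : ‖u z‖ ≤ 1 := by
  have hk := mob_key zb hzb θ u hu hz
  have hd : 1 - ‖zb‖ ≤ ‖1 - (starRingEnd ℂ) zb * z‖ := denom_lb zb hzb hz
  have hDpos : 0 < ‖1 - (starRingEnd ℂ) zb * z‖ := by linarith
  have hRHS : 0 ≤ (1 - ‖z‖ ^ 2) * (1 - ‖zb‖ ^ 2) := by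
    have h1 := norm_nonneg z
    have h2 := norm_nonneg zb
    apply mul_nonneg <;> nlinarith
  have h1 : 0 ≤ (1 - ‖u z‖ ^ 2) * ‖1 - (starRingEnd ℂ) zb * z‖ ^ 2 := by
    rw [hk]; exact hRHS
  by_contra hcon
  push_neg at hcon
  have : (1 - ‖u z‖ ^ 2) * ‖1 - (starRingEnd ℂ) zb * z‖ ^ 2 < 0 := by
    apply mul_neg_of_neg_of_pos
    · nlinarith
    · positivity
  linarith

include hzb hu in
lemma mob_one_sub_lb {z : ℂ} (hz : ‖z‖ ≤ 1) :
    (1 - ‖zb‖ ^ 2) / (2 * (1 + ‖zb‖)^2) * (1 - ‖z‖)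
      ≤ 1 - ‖u z‖ := by
  set au := ‖u z‖ with hau
  set D := ‖1 - (starRingEnd ℂ) zb * z‖ with hD
  have hk := mob_key zb hzb θ u hu hz
  rw [← hau, ← hD] at hk
  have hD2 : D ≤ 1 + ‖zb‖ := denom_ub zb hz
  have hD0 : 0 ≤ D := norm_nonneg _
  have hau1 : au ≤ 1 := absu_le_one zb hzb θ u hu hz
  have hau0 : 0 ≤ au := norm_nonneg _
  have hz0 : 0 ≤ ‖z‖ := norm_nonneg _
  have hρ0 : 0 ≤ ‖zb‖ := norm_nonneg _
  rw [div_mul_eq_mul_div, div_le_iff₀ (by positivity)]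
  have haux : (1 + au) * D^2 ≤ 2 * (1 + ‖zb‖)^2 := by
    nlinarith [mul_le_mul hD2 hD2 hD0 (by linarith : (0:ℝ) ≤ 1 + ‖zb‖)]
  have h2 : (1 - au) * ((1 + au) * D^2) ≤ (1 - au) * (2 * (1 + ‖zb‖)^2) :=
    mul_le_mul_of_nonneg_left haux (by linarith)
  nlinarith [h2, hk, mul_nonneg (mul_nonneg hz0 (sub_nonneg.2 hz))
    (by nlinarith : (0:ℝ) ≤ 1 - ‖zb‖ ^ 2)]

include hzb hu in
lemma mob_one_sub_ub {z : ℂ} (hz : ‖z‖ ≤ 1) :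
    1 - ‖u z‖
      ≤ 2 * (1 - ‖zb‖ ^ 2) / (1 - ‖zb‖)^2 * (1 - ‖z‖) := by
  set au := ‖u z‖ with hau
  set D := ‖1 - (starRingEnd ℂ) zb * z‖ with hD
  have hk := mob_key zb hzb θ u hu hz
  rw [← hau, ← hD] at hk
  have hD1 : 1 - ‖zb‖ ≤ D := denom_lb zb hzb hz
  have hD0 : 0 ≤ D := norm_nonneg _
  have hau1 : au ≤ 1 := absu_le_one zb hzb θ u hu hz
  have hau0 : 0 ≤ au := norm_nonneg _
  have hz0 : 0 ≤ ‖z‖ := norm_nonneg _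
  have hρ0 : 0 ≤ ‖zb‖ := norm_nonneg _
  rw [div_mul_eq_mul_div, le_div_iff₀ (pow_pos (by linarith) 2)]
  have s2 : (1 - au^2) * (1 - ‖zb‖)^2 ≤ (1 - au^2) * D^2 := by
    refine mul_le_mul_of_nonneg_left ?_ (by nlinarith)
    nlinarith [mul_le_mul hD1 hD1 (by linarith : (0:ℝ) ≤ 1 - ‖zb‖) hD0]
  nlinarith [s2, hk, mul_nonneg (sq_nonneg (1 - ‖z‖))
    (by nlinarith : (0:ℝ) ≤ 1 - ‖zb‖ ^ 2),
    mul_nonneg (mul_nonneg hau0 (sub_nonneg.2 hau1)) (sq_nonneg (1 - ‖zb‖))]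
end Mob2

lemma rsq (z : ℂ) : z.re^2 + z.im^2 = (‖z‖)^2 := by
  rw [Complex.sq_norm, Complex.normSq_apply]; ring

section LemI
variable (m : ℝ) (z : ℂ) (hz : ‖z‖ < 1)

include hz

lemma one_add_sq_ne : (1 : ℂ) + z^2 ≠ 0 := by
  intro h
  have : ‖z^2‖ = 1 := by
    have : z^2 = -1 := by linear_combination h
    rw [this]; simp
  rw [norm_pow] at this
  nlinarith [norm_nonneg z]

lemma Kpos : 0 < Complex.normSq (1 + z^2) :=
  Complex.normSq_pos.2 (one_add_sq_ne z hz)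

lemma abs_wre (hm : 0 < m) :
    |(-2 * (m:ℂ) * z / (1 + z ^ 2)).re|
      = 2 * m * (1 + (‖z‖)^2) * |z.re| / Complex.normSq (1 + z^2) := by
  rw [re_psi, rsq]
  rw [abs_div, _root_.abs_of_pos (Kpos z hz)]
  congr 1
  rw [show -2 * m * (1 + ‖z‖ ^ 2) * z.re
      = -(2 * m * (1 + ‖z‖ ^ 2) * z.re) by ring, abs_neg, abs_mul,
    _root_.abs_of_pos (by positivity : (0:ℝ) < 2 * m * (1 + ‖z‖ ^ 2))]

lemma abs_wim (hm : 0 < m) :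
    |(-2 * (m:ℂ) * z / (1 + z ^ 2)).im|
      = 2 * m * (1 - (‖z‖)^2) * |z.im| / Complex.normSq (1 + z^2) := by
  rw [im_psi, rsq]
  rw [abs_div, _root_.abs_of_pos (Kpos z hz)]
  congr 1
  rw [show -2 * m * (1 - ‖z‖ ^ 2) * z.im
      = -(2 * m * (1 - ‖z‖ ^ 2) * z.im) by ring, abs_neg, abs_mul,
    _root_.abs_of_pos ?_]
  have hsq : (‖z‖)^2 < 1 := by nlinarith [norm_nonneg z]
  nlinarith [mul_pos hm (sub_pos.2 hsq)]

lemma L_lb : (1 - ‖z‖) + |z.im| ≤ 2 * ‖1 - z^2‖ := by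
  have hL2 : (‖1 - z^2‖)^2 = (1 - (‖z‖)^2)^2 + 4*z.im^2 := by
    rw [Complex.sq_norm, normSq_key2, rsq]
  have hL0 : 0 ≤ ‖1 - z^2‖ := norm_nonneg _
  have h1 : 1 - (‖z‖)^2 ≤ ‖1 - z^2‖ := by
    nlinarith [sq_nonneg z.im, norm_nonneg z]
  have h2 : 2 * |z.im| ≤ ‖1 - z^2‖ := by
    nlinarith [_root_.sq_abs z.im, abs_nonneg z.im, sq_nonneg (1 - (‖z‖)^2)]
  nlinarith [norm_nonneg z, abs_nonneg z.im]

lemma L_ub : ‖1 - z^2‖ ≤ 2 * ((1 - ‖z‖) + |z.im|) := by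
  have hL2 : (‖1 - z^2‖)^2 = (1 - (‖z‖)^2)^2 + 4*z.im^2 := by
    rw [Complex.sq_norm, normSq_key2, rsq]
  have hL0 : 0 ≤ ‖1 - z^2‖ := norm_nonneg _
  have hB : (0:ℝ) ≤ (1 - (‖z‖)^2) + 2*|z.im| := by
    have := norm_nonneg z
    have := abs_nonneg z.im
    nlinarith
  have h1 : ‖1 - z^2‖ ≤ (1 - (‖z‖)^2) + 2*|z.im| := by
    nlinarith [_root_.sq_abs z.im, abs_nonneg z.im, norm_nonneg z, hB,
      mul_nonneg (mul_nonneg (by norm_num : (0:ℝ) ≤ 4) (abs_nonneg z.im))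
        (by nlinarith [norm_nonneg z] : (0:ℝ) ≤ 1 - (‖z‖)^2)]
  nlinarith [norm_nonneg z, abs_nonneg z.im]

lemma lemI_upper (hm : 0 < m) :
    infDist (-2 * (m:ℂ) * z / (1 + z ^ 2)) (diracSpectrum m)
      ≤ 8 * m * (‖1 - z^2‖ * (1 - ‖z‖) / Complex.normSq (1 + z^2)) := by
  set r := ‖z‖ with hr
  set K := Complex.normSq (1 + z^2) with hK
  have hKpos : 0 < K := Kpos z hz
  have hr0 : 0 ≤ r := norm_nonneg z
  have hxr : |z.re| ≤ r := by
    have := rsq z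
    nlinarith [abs_nonneg z.re, _root_.sq_abs z.re, sq_nonneg z.im]
  have hKe : K = (1 - r^2)^2 + 4*|z.re|^2 := by
    rw [hK, normSq_key, rsq, ← hr, _root_.sq_abs]
  refine le_trans (infDist_le' m hm _) ?_
  have hbound1 : max (m - |(-2 * (m:ℂ) * z / (1 + z ^ 2)).re|) 0 ≤ 4*m*(1-r)^2 / K := by
    rw [max_le_iff]
    constructor
    · rw [abs_wre m z hz hm, ← hK, ← hr, sub_le_iff_le_add, ← add_div,
        le_div_iff₀ hKpos]
      have hf := RL1 r |z.re| (abs_nonneg _) hxr hz.le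
      rw [hKe]
      nlinarith [mul_le_mul_of_nonneg_left hf hm.le]
    · positivity
  have hbound2 : |(-2 * (m:ℂ) * z / (1 + z ^ 2)).im| ≤ 4*m*(1-r)*|z.im| / K := by
    rw [abs_wim m z hz hm, ← hK, ← hr, div_le_div_iff₀ hKpos hKpos]
    have h1r : (0:ℝ) ≤ 1 - r := by linarith
    have hnum : 2*m*(1-r^2)*|z.im| ≤ 4*m*(1-r)*|z.im| := by
      nlinarith [mul_nonneg (mul_nonneg (mul_nonneg hm.le (abs_nonneg z.im)) h1r) h1r]
    nlinarith [hnum, hKpos]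
  have hsum : 4*m*(1-r)^2 / K + 4*m*(1-r)*|z.im| / K
      ≤ 8 * m * (‖1 - z^2‖ * (1 - r) / K) := by
    rw [← add_div, show 8 * m * (‖1 - z^2‖ * (1 - r) / K)
      = 8 * m * (‖1 - z^2‖ * (1 - r)) / K by ring,
      div_le_div_iff₀ hKpos hKpos]
    have hLlb := L_lb z hz
    have h1r : 0 ≤ 1 - r := by linarith
    have : 4*m*(1-r)^2 + 4*m*(1-r)*|z.im| ≤ 8 * m * (‖1 - z^2‖ * (1 - r)) := by
      have hmul := mul_le_mul_of_nonneg_left hLlb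
        (mul_nonneg (by linarith : (0:ℝ) ≤ 4*m) h1r)
      nlinarith [hmul]
    nlinarith [this, hKpos]
  linarith [hbound1, hbound2, hsum,
    add_le_add hbound1 hbound2]

lemma lemI_lower (hm : 0 < m) :
    m / 32 * (‖1 - z^2‖ * (1 - ‖z‖) / Complex.normSq (1 + z^2))
      ≤ infDist (-2 * (m:ℂ) * z / (1 + z ^ 2)) (diracSpectrum m) := by
  set r := ‖z‖ with hr
  set K := Complex.normSq (1 + z^2) with hK
  have hKpos : 0 < K := Kpos z hz
  have hr0 : 0 ≤ r := norm_nonneg z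
  have hr2 : z.re^2 + z.im^2 = r^2 := by rw [rsq z, hr]
  have hxr : |z.re| ≤ r := by
    nlinarith [abs_nonneg z.re, _root_.sq_abs z.re, sq_nonneg z.im]
  have hKe : K = (1 - r^2)^2 + 4*|z.re|^2 := by
    rw [hK, normSq_key, rsq, ← hr, _root_.sq_abs]
  refine le_trans ?_ (infDist_ge m hm _)
  -- lower bound the max term plus im term
  have hstep : m / 16 * (‖1 - z^2‖ * (1 - r) / K)
      ≤ max (m - |(-2 * (m:ℂ) * z / (1 + z ^ 2)).re|) 0
          + |(-2 * (m:ℂ) * z / (1 + z ^ 2)).im| := by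
    have hf := RL2 r |z.re| |z.im| (abs_nonneg _) (abs_nonneg _)
      (by rw [_root_.sq_abs, _root_.sq_abs]; exact hr2) hr0 hz.le
    -- max (m - |w.re|) 0 ≥ (m/K) * max (K - 2(1+r²)|z.re|) 0
    have hA : m / K * max ((1 - r^2)^2 + 4*|z.re|^2 - 2*(1+r^2)*|z.re|) 0
        ≤ max (m - |(-2 * (m:ℂ) * z / (1 + z ^ 2)).re|) 0 := by
      rcases le_total ((1 - r^2)^2 + 4*|z.re|^2 - 2*(1+r^2)*|z.re|) 0 with h | h
      · rw [max_eq_right h, mul_zero]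
        exact le_max_right _ _
      · rw [max_eq_left h]
        refine le_trans ?_ (le_max_left _ _)
        rw [abs_wre m z hz hm, ← hK, ← hr]
        rw [show (1 - r^2)^2 + 4*|z.re|^2 - 2*(1+r^2)*|z.re| = K - 2*(1+r^2)*|z.re| by
          linear_combination -hKe]
        rw [mul_sub]
        have e1 : m / K * K = m := by field_simp
        rw [e1]
        have e2 : m / K * (2*(1+r^2)*|z.re|) = 2 * m * (1 + r^2) * |z.re| / K := by
          field_simp
        rw [e2]
    have hB : |(-2 * (m:ℂ) * z / (1 + z ^ 2)).im| = m / K * (2*(1-r^2)*|z.im|) := by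
      rw [abs_wim m z hz hm, ← hK, ← hr]
      field_simp
    rw [hB]
    refine le_trans ?_ (add_le_add_left hA _)
    rw [← mul_add]
    -- now : m/16 * (L(1-r)/K) ≤ m/K * (max f 0 + 2(1-r²)|z.im|)
    have hW : ‖1 - z^2‖ * (1 - r) / 16
        ≤ max ((1 - r^2)^2 + 4*|z.re|^2 - 2*(1+r^2)*|z.re|) 0 + 2*(1-r^2)*|z.im| := by
      have h1r : (0:ℝ) ≤ 1 - r := by linarith
      have hta : 2*(1-r)*|z.im| ≤ 2*(1-r^2)*|z.im| := by
        nlinarith [mul_nonneg (mul_nonneg hr0 h1r) (abs_nonneg z.im)]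
      have hLub := L_ub z hz
      -- L(1-r)/16 ≤ ((1-r)+|z.im|)(1-r)/8 ≤ (1-r)²/8 + (1-r)|z.im|/8
      have hL : ‖1 - z^2‖ * (1 - r) / 16 ≤ ((1-r) + |z.im|) * (1-r) / 8 := by
        nlinarith [mul_le_mul_of_nonneg_right hLub h1r]
      have hcomb : ((1-r) + |z.im|) * (1-r) / 8 ≤
          max ((1 - r^2)^2 + 4*|z.re|^2 - 2*(1+r^2)*|z.re|) 0 + 2*(1-r^2)*|z.im| := by
        have h2 : (1-r)*|z.im| ≤ 2*(1-r^2)*|z.im| := by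
          nlinarith [mul_nonneg (mul_nonneg hr0 h1r) (abs_nonneg z.im),
            mul_nonneg h1r (abs_nonneg z.im)]
        have h3 := hf
        have h4 : 0 ≤ (1-r)*|z.im| := mul_nonneg h1r (abs_nonneg z.im)
        nlinarith [h3, h2]
      linarith
    calc m / 16 * (‖1 - z^2‖ * (1 - r) / K)
        = m / K * (‖1 - z^2‖ * (1 - r) / 16) := by
          rw [div_mul_div_comm, div_mul_div_comm, mul_comm (16:ℝ) K]
      _ ≤ m / K * (max ((1 - r^2)^2 + 4*|z.re|^2 - 2*(1+r^2)*|z.re|) 0 + 2*(1-r^2)*|z.im|) :=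
          mul_le_mul_of_nonneg_left hW (by positivity)
  calc m / 32 * (‖1 - z^2‖ * (1 - r) / K)
      = (m / 16 * (‖1 - z^2‖ * (1 - r) / K)) / 2 := by ring
    _ ≤ _ := by linarith [hstep]

end LemI

/-- `d(ψ(z), E_m) ≈ (|u(z)-u(1)|·|u(z)-u(-1)| / (|u(z)-u(i)|²·|u(z)-u(-i)|²)) · (1-|u(z)|)`
for `ψ(z) = -2mz/(1+z²)` and `u` a Möbius automorphism of the disc. -/
theorem stmt5 (m : ℝ) (hm : 0 < m) (zb : ℂ) (hzb : ‖zb‖ < 1) (θ : ℝ)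
    (u : ℂ → ℂ)
    (hu : ∀ z : ℂ, u z = Complex.exp (θ * Complex.I) * (z - zb) / (1 - (starRingEnd ℂ) zb * z)) :
    ∃ C₁ > 0, ∃ C₂ > 0, ∀ z ∈ ball (0 : ℂ) 1,
      C₁ * (‖u z - u 1‖ * ‖u z - u (-1)‖ /
          (‖u z - u Complex.I‖ ^ 2 * ‖u z - u (-Complex.I)‖ ^ 2) *
            (1 - ‖u z‖)) ≤
        infDist (-2 * m * z / (1 + z ^ 2)) (diracSpectrum m) ∧
      infDist (-2 * m * z / (1 + z ^ 2)) (diracSpectrum m) ≤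
        C₂ * (‖u z - u 1‖ * ‖u z - u (-1)‖ /
          (‖u z - u Complex.I‖ ^ 2 * ‖u z - u (-Complex.I)‖ ^ 2) *
            (1 - ‖u z‖)) := by
  set ρ := ‖zb‖ with hρ
  have hρ0 : 0 ≤ ρ := norm_nonneg zb
  have hnsb : Complex.normSq zb = ρ^2 := (Complex.sq_norm zb).symm
  set a : ℝ := (1 - ρ^2) / (1 + ρ)^2 with ha
  set b : ℝ := (1 - ρ^2) / (1 - ρ)^2 with hb
  have hρ2 : ρ^2 < 1 := by nlinarith
  have hapos : 0 < a := by
    rw [ha]; apply div_pos (by nlinarith) (by positivity)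
  have hbpos : 0 < b := by
    rw [hb]; apply div_pos (by nlinarith) (pow_pos (by linarith) 2)
  set β : ℝ := 2 * b^3 / a^4 with hβ
  set α : ℝ := a^3 / (2 * b^4) with hα
  have hαpos : 0 < α := by rw [hα]; positivity
  have hβpos : 0 < β := by rw [hβ]; positivity
  refine ⟨m / 32 / β, by positivity, 8 * m / α, by positivity, ?_⟩
  intro z hzball
  have hz : ‖z‖ < 1 := by
    simpa [Complex.dist_eq] using (mem_ball.mp hzball)
  set r := ‖z‖ with hr
  set K := Complex.normSq (1 + z^2) with hK
  have hKpos : 0 < K := Kpos z hz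
  set L := ‖1 - z^2‖ with hL
  set P := L * (1 - r) / K with hP
  have hLpos : 0 < L := by
    rw [hL]
    apply norm_pos_iff.mpr
    intro h
    have h2 : z^2 = 1 := by linear_combination -h
    have : ‖z^2‖ = 1 := by rw [h2]; simp
    rw [norm_pow] at this
    nlinarith [norm_nonneg z]
  have hPpos : 0 < P := by
    rw [hP]; apply div_pos (by nlinarith [hLpos]) hKpos
  -- abs values of boundary points
  have h1 : ‖(1:ℂ)‖ ≤ 1 := by simp
  have hm1 : ‖(-1:ℂ)‖ ≤ 1 := by simp
  have hI : ‖Complex.I‖ ≤ 1 := by simp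
  have hmI : ‖-Complex.I‖ ≤ 1 := by simp
  have h1r : (0:ℝ) ≤ 1 - r := by linarith
  -- product identities
  have hprod1 : ‖z - 1‖ * ‖z - (-1)‖ = L := by
    rw [hL, ← norm_mul, show (z - 1) * (z - (-1)) = -(1 - z^2) by ring, norm_neg]
  have hprod2 : ‖z - Complex.I‖ * ‖z - (-Complex.I)‖
      = ‖1 + z^2‖ := by
    rw [← norm_mul]
    congr 1
    linear_combination (-1 : ℂ) * Complex.I_sq
  have hKabs : K = (‖1 + z^2‖)^2 := by rw [hK, Complex.sq_norm]
  -- N bounds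
  have hA1lb := mob_lb zb hzb θ u hu hz.le h1
  have hA2lb := mob_lb zb hzb θ u hu hz.le hm1
  have hA3lb := mob_lb zb hzb θ u hu hz.le hI
  have hA4lb := mob_lb zb hzb θ u hu hz.le hmI
  have hA1ub := mob_ub zb hzb θ u hu hz.le h1
  have hA2ub := mob_ub zb hzb θ u hu hz.le hm1
  have hA3ub := mob_ub zb hzb θ u hu hz.le hI
  have hA4ub := mob_ub zb hzb θ u hu hz.le hmI
  rw [hnsb, ← ha] at hA1lb hA2lb hA3lb hA4lb
  rw [hnsb, ← hb] at hA1ub hA2ub hA3ub hA4ub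
  set A1 := ‖u z - u 1‖
  set A2 := ‖u z - u (-1)‖
  set A3 := ‖u z - u Complex.I‖
  set A4 := ‖u z - u (-Complex.I)‖
  have hA1nn : 0 ≤ A1 := norm_nonneg _
  have hA2nn : 0 ≤ A2 := norm_nonneg _
  have hA3nn : 0 ≤ A3 := norm_nonneg _
  have hA4nn : 0 ≤ A4 := norm_nonneg _
  have habsnn : ∀ w : ℂ, 0 ≤ ‖w‖ := fun w => norm_nonneg w
  have hN_lb : a^2 * L ≤ A1 * A2 := by
    calc a^2 * L = (a * ‖z - 1‖) * (a * ‖z - (-1)‖) := by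
          rw [← hprod1]; ring
      _ ≤ A1 * A2 :=
          mul_le_mul hA1lb hA2lb (mul_nonneg hapos.le (habsnn _)) hA1nn
  have hN_ub : A1 * A2 ≤ b^2 * L := by
    calc A1 * A2 ≤ (b * ‖z - 1‖) * (b * ‖z - (-1)‖) :=
          mul_le_mul hA1ub hA2ub hA2nn (mul_nonneg hbpos.le (habsnn _))
      _ = b^2 * L := by rw [← hprod1]; ring
  -- denominator bounds
  have hD_lb : a^4 * K ≤ A3^2 * A4^2 := by
    have h3 : (a * ‖z - Complex.I‖)^2 ≤ A3^2 :=
      pow_le_pow_left₀ (mul_nonneg hapos.le (habsnn _)) hA3lb 2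
    have h4 : (a * ‖z - (-Complex.I)‖)^2 ≤ A4^2 :=
      pow_le_pow_left₀ (mul_nonneg hapos.le (habsnn _)) hA4lb 2
    calc a^4 * K
        = (a * ‖z - Complex.I‖)^2 * (a * ‖z - (-Complex.I)‖)^2 := by
          rw [hKabs, ← hprod2]; ring
      _ ≤ A3^2 * A4^2 :=
          mul_le_mul h3 h4 (by positivity) (sq_nonneg _)
  have hD_ub : A3^2 * A4^2 ≤ b^4 * K := by
    have h3 : A3^2 ≤ (b * ‖z - Complex.I‖)^2 := pow_le_pow_left₀ hA3nn hA3ub 2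
    have h4 : A4^2 ≤ (b * ‖z - (-Complex.I)‖)^2 := pow_le_pow_left₀ hA4nn hA4ub 2
    calc A3^2 * A4^2
        ≤ (b * ‖z - Complex.I‖)^2 * (b * ‖z - (-Complex.I)‖)^2 :=
          mul_le_mul h3 h4 (sq_nonneg _) (by positivity)
      _ = b^4 * K := by rw [hKabs, ← hprod2]; ring
  have hDpos : 0 < A3^2 * A4^2 := lt_of_lt_of_le (by positivity) hD_lb
  have hNnn : 0 ≤ A1 * A2 := mul_nonneg hA1nn hA2nn
  -- E bounds
  set E := 1 - ‖u z‖ with hE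
  have hE_lb : a / 2 * (1 - r) ≤ E := by
    have := mob_one_sub_lb zb hzb θ u hu hz.le
    rw [← hr, ← hρ, ← hE] at this
    refine le_trans (le_of_eq ?_) this
    rw [ha, div_div, mul_comm ((1+ρ)^2) (2:ℝ)]
  have hE_ub : E ≤ 2 * b * (1 - r) := by
    have := mob_one_sub_ub zb hzb θ u hu hz.le
    rw [← hr, ← hρ, ← hE] at this
    refine le_trans this (le_of_eq ?_)
    rw [hb, ← mul_div_assoc]
  have hEnn : 0 ≤ E := le_trans (by positivity) hE_lb
  -- combine
  have hQ_lb : α * P ≤ A1 * A2 / (A3^2 * A4^2) * E := by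
    have step1 : a^2 * L / (b^4 * K) ≤ A1 * A2 / (A3^2 * A4^2) :=
      div_le_div₀ hNnn hN_lb hDpos hD_ub
    calc α * P = (a^2 * L / (b^4 * K)) * (a / 2 * (1 - r)) := by
          rw [hα, hP]; field_simp
      _ ≤ A1 * A2 / (A3^2 * A4^2) * E :=
          mul_le_mul step1 hE_lb (by positivity) (div_nonneg hNnn hDpos.le)
  have hQ_ub : A1 * A2 / (A3^2 * A4^2) * E ≤ β * P := by
    have step1 : A1 * A2 / (A3^2 * A4^2) ≤ b^2 * L / (a^4 * K) :=
      div_le_div₀ (by positivity) hN_ub (by positivity) hD_lb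
    calc A1 * A2 / (A3^2 * A4^2) * E ≤ (b^2 * L / (a^4 * K)) * (2 * b * (1 - r)) :=
          mul_le_mul step1 hE_ub hEnn (by positivity)
      _ = β * P := by rw [hβ, hP]; field_simp
  constructor
  · calc m / 32 / β * (A1 * A2 / (A3^2 * A4^2) * E)
        ≤ m / 32 / β * (β * P) :=
          mul_le_mul_of_nonneg_left hQ_ub (by positivity)
      _ = m / 32 * P := by
          field_simp
      _ ≤ _ := by
          have := lemI_lower m z hz hm
          rw [← hK, ← hL, ← hr, ← hP] at this
          exact this
  · calc infDist (-2 * (m:ℂ) * z / (1 + z ^ 2)) (diracSpectrum m)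
        ≤ 8 * m * P := by
          have := lemI_upper m z hz hm
          rw [← hK, ← hL, ← hr, ← hP] at this
          exact this
      _ = 8 * m / α * (α * P) := by field_simp
      _ ≤ 8 * m / α * (A1 * A2 / (A3^2 * A4^2) * E) :=
          mul_le_mul_of_nonneg_left hQ_lb (by positivity)
end

section
/- Let m > 0, ψ(z) := −2mz/(1 + z²), and let u(z) := e^{iθ}(z − z_b)/(1 − \overline{z_b} z) be a disc automorphism with z_b ∈ 𝔻, θ ∈ ℝ. Then there exist constants C_1, C_2 > 0, depending only on m and z_b, such that for every z ∈ 𝔻, writing λ := ψ(z): C_1 · d(λ, E_m) / ( (|λ + m| · |λ − m|)^{1/2} (1 + |λ|) ) ≤ 1 − |u(z)| ≤ C_2 · d(λ, E_m) / ( (|λ + m| · |λ − m|)^{1/2} (1 + |λ|) ). -/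
open Metric

set_option maxHeartbeats 2000000

lemma aux_dist (m : ℝ) (hm : 0 < m) (w : ℂ) :
    (|w.im| + max (m - |w.re|) 0) / 2 ≤ infDist w (diracSpectrum m) ∧
    infDist w (diracSpectrum m) ≤ |w.im| + max (m - |w.re|) 0 := by
  constructor
  · by_contra hcon
    push_neg at hcon
    obtain ⟨p, hp, hlt⟩ :=
      (infDist_lt_iff ⟨(m : ℂ), by simp [diracSpectrum, abs_of_pos hm]⟩).mp hcon
    apply absurd hlt
    push_neg
    obtain ⟨hp1, hp2⟩ := hp
    rw [Complex.dist_eq]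
    have h1 : |(w - p).re| ≤ ‖w - p‖ := Complex.abs_re_le_norm _
    have h2 : |(w - p).im| ≤ ‖w - p‖ := Complex.abs_im_le_norm _
    have h3 : (w - p).im = w.im := by simp [hp1]
    have h4 : max (m - |w.re|) 0 ≤ |(w - p).re| := by
      rw [max_le_iff]
      constructor
      · have : |p.re| - |w.re| ≤ |w.re - p.re| := by
          have := abs_sub_abs_le_abs_sub p.re w.re
          rw [abs_sub_comm] at this; linarith
        simp only [Complex.sub_re]
        linarith
      · positivity
    rw [h3] at h2
    linarith
  · rcases le_or_gt m |w.re| with h | h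
    · have hmem : (w.re : ℂ) ∈ diracSpectrum m := ⟨by simp, by simpa using h⟩
      have := infDist_le_dist_of_mem (x := w) hmem
      have hd : dist w (w.re : ℂ) = |w.im| := by
        rw [Complex.dist_eq]
        have : w - (w.re : ℂ) = ⟨0, w.im⟩ := by
          apply Complex.ext <;> simp
        rw [this]
        simp only [Complex.norm_def, Complex.normSq_apply]
        rw [show (0:ℝ) * 0 + w.im * w.im = w.im ^ 2 by ring, Real.sqrt_sq_eq_abs]
      rw [hd] at this
      have : infDist w (diracSpectrum m) ≤ |w.im| := this
      have hmax : max (m - |w.re|) 0 = 0 := max_eq_right (by linarith)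
      linarith
    · set t : ℝ := if 0 ≤ w.re then m else -m with ht
      have hmem : (t : ℂ) ∈ diracSpectrum m := by
        constructor
        · simp
        · simp only [Complex.ofReal_re, ht]
          split <;> simp [abs_of_pos hm, abs_of_neg (neg_neg_iff_pos.mpr hm), hm.le]
      have := infDist_le_dist_of_mem (x := w) hmem
      have hre : |(w - (t:ℂ)).re| = m - |w.re| := by
        simp only [Complex.sub_re, Complex.ofReal_re, ht]
        rcases le_or_gt 0 w.re with h0 | h0
        · rw [if_pos h0, abs_of_nonpos (by rw [abs_of_nonneg h0] at h; linarith),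
            abs_of_nonneg h0]; ring
        · rw [if_neg (not_le.mpr h0), abs_of_nonneg (by rw [abs_of_neg h0] at h; linarith),
            abs_of_neg h0]; ring
      have hd : dist w (t : ℂ) ≤ |w.im| + (m - |w.re|) := by
        rw [Complex.dist_eq]
        calc ‖w - t‖ ≤ |(w - (t:ℂ)).re| + |(w - (t:ℂ)).im| :=
              Complex.norm_le_abs_re_add_abs_im _
          _ = (m - |w.re|) + |w.im| := by rw [hre]; simp
          _ = |w.im| + (m - |w.re|) := by ring
      have hmax : max (m - |w.re|) 0 = m - |w.re| := max_eq_left (by linarith)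
      linarith


lemma aux_u (zb z : ℂ) (hzb : ‖zb‖ < 1) (hz : ‖z‖ < 1) (θ : ℝ) :
    (1 - Complex.normSq zb) * (1 - Complex.normSq z) / 8 ≤
      1 - ‖Complex.exp (θ * Complex.I) * (z - zb) / (1 - (starRingEnd ℂ) zb * z)‖ ∧
    1 - ‖Complex.exp (θ * Complex.I) * (z - zb) / (1 - (starRingEnd ℂ) zb * z)‖ ≤
      2 * (1 - Complex.normSq z) / (1 - ‖zb‖) := by
  set q := 1 - (starRingEnd ℂ) zb * z with hq
  have hQlb : 1 - ‖zb‖ * ‖z‖ ≤ ‖q‖ := by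
    have h1 : ‖(starRingEnd ℂ) zb * z‖ = ‖zb‖ * ‖z‖ := by
      rw [norm_mul, Complex.norm_conj]
    calc 1 - ‖zb‖ * ‖z‖
        = ‖(1:ℂ)‖ - ‖(starRingEnd ℂ) zb * z‖ := by rw [h1]; simp
      _ ≤ ‖1 - (starRingEnd ℂ) zb * z‖ := by
          exact le_trans (le_abs_self _) (abs_norm_sub_norm_le _ _)
      _ = ‖q‖ := rfl
  have hzb0 : 0 ≤ ‖zb‖ := norm_nonneg _
  have hz0 : 0 ≤ ‖z‖ := norm_nonneg _
  have hQpos : 0 < ‖q‖ := by nlinarith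
  have key : Complex.normSq q - Complex.normSq (z - zb) =
      (1 - Complex.normSq zb) * (1 - Complex.normSq z) := by
    simp only [hq, Complex.normSq_apply, Complex.sub_re, Complex.sub_im, Complex.mul_re,
      Complex.mul_im, Complex.one_re, Complex.one_im, Complex.conj_re, Complex.conj_im]
    ring
  have habsu : ‖Complex.exp (θ * Complex.I) * (z - zb) / q‖ =
      ‖z - zb‖ / ‖q‖ := by
    rw [norm_div, norm_mul, Complex.norm_exp]
    norm_num [Complex.mul_re]
  set P := ‖z - zb‖ with hP
  set Q := ‖q‖ with hQ2
  have hP0 : 0 ≤ P := norm_nonneg _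
  have hnsq : Q^2 - P^2 = (1 - Complex.normSq zb) * (1 - Complex.normSq z) := by
    rw [hP, hQ2, Complex.sq_norm, Complex.sq_norm]; exact key
  have hnz : Complex.normSq z = ‖z‖ ^ 2 := (Complex.sq_norm z).symm
  have hnzb : Complex.normSq zb = ‖zb‖ ^ 2 := (Complex.sq_norm zb).symm
  have hRpos : 0 < (1 - Complex.normSq zb) * (1 - Complex.normSq z) := by
    rw [hnz, hnzb]
    have h1 : 0 < 1 - ‖zb‖ ^ 2 := by nlinarith
    have h2 : 0 < 1 - ‖z‖ ^ 2 := by nlinarith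
    exact mul_pos h1 h2
  have hPQ : P ≤ Q := by nlinarith
  have hQle : Q ≤ 2 := by
    rw [hQ2]
    calc ‖q‖ ≤ ‖(1:ℂ)‖ + ‖(starRingEnd ℂ) zb * z‖ := by
          exact le_trans (le_of_eq rfl) (norm_sub_le _ _)
      _ ≤ 2 := by rw [norm_mul, Complex.norm_conj]; simp; nlinarith
  have hQlb2 : 1 - ‖zb‖ ≤ Q := by nlinarith
  have hmain : 1 - ‖Complex.exp (θ * Complex.I) * (z - zb) / q‖ = (Q - P) / Q := by
    rw [habsu]; field_simp
  have hQP : (Q - P) * (Q + P) = (1 - Complex.normSq zb) * (1 - Complex.normSq z) := by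
    nlinarith [hnsq]
  rw [hmain]
  clear_value P Q q
  constructor
  · rw [div_le_div_iff₀ (by norm_num) hQpos]
    have h8 : (Q + P) * Q ≤ 8 := by nlinarith
    nlinarith [mul_le_mul_of_nonneg_left h8 (by linarith : (0:ℝ) ≤ Q - P)]
  · have hzb1 : 0 < 1 - ‖zb‖ := by linarith
    rw [div_le_div_iff₀ hQpos hzb1]
    have hz1 : 0 < 1 - Complex.normSq z := by rw [hnz]; nlinarith
    have s1 : (Q - P) * (1 - ‖zb‖) ≤ (Q - P) * (Q + P) :=
      mul_le_mul_of_nonneg_left (by linarith) (by linarith)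
    have s2 : (1 - Complex.normSq zb) * (1 - Complex.normSq z) ≤
        2 * (1 - ‖zb‖) * (1 - Complex.normSq z) := by
      have h2 : 1 - Complex.normSq zb ≤ 2 * (1 - ‖zb‖) := by rw [hnzb]; nlinarith
      exact mul_le_mul_of_nonneg_right h2 (by linarith)
    have s3 : 2 * (1 - ‖zb‖) * (1 - Complex.normSq z) ≤
        2 * Q * (1 - Complex.normSq z) :=
      mul_le_mul_of_nonneg_right (by linarith) (by linarith)
    nlinarith


lemma aux_core (X Y L : ℝ) (hX : 0 ≤ X) (hY : 0 ≤ Y) (hr : X^2+Y^2 < 1)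
    (hL : L = Real.sqrt ((1-X^2+Y^2)^2+4*X^2*Y^2)) :
    (1-X^2-Y^2)*L/12 ≤ 2*(1-X^2-Y^2)*Y + max ((1+X^2-Y^2)^2+4*X^2*Y^2 - 2*(1+X^2+Y^2)*X) 0 ∧
    2*(1-X^2-Y^2)*Y + max ((1+X^2-Y^2)^2+4*X^2*Y^2 - 2*(1+X^2+Y^2)*X) 0 ≤
      8*((1-X^2-Y^2)*L) := by
  have hX1 : X ≤ 1 := by nlinarith
  have hY1 : Y ≤ 1 := by nlinarith
  have hρ : 0 < 1-X^2-Y^2 := by linarith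
  set B : ℝ := 1-X^2+Y^2 with hB
  have hB0 : 0 ≤ B := by nlinarith
  have hXY : 0 ≤ 2*X*Y := by positivity
  -- L bounds
  have hL1 : B ≤ L := by
    rw [hL]
    have : B = Real.sqrt (B^2) := (Real.sqrt_sq hB0).symm
    rw [this]
    apply Real.sqrt_le_sqrt; nlinarith [sq_nonneg (X*Y)]
  have hL2 : L ≤ B + 2*X*Y := by
    rw [hL]
    rw [show (1-X^2+Y^2)^2+4*X^2*Y^2 = B^2 + (2*X*Y)^2 by rw [hB]; ring]
    calc Real.sqrt (B^2 + (2*X*Y)^2) ≤ Real.sqrt ((B + 2*X*Y)^2) := by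
          apply Real.sqrt_le_sqrt; nlinarith
      _ = B + 2*X*Y := Real.sqrt_sq (by linarith)
  have hL3 : (B + 2*X*Y)/2 ≤ L := by
    rw [hL, show (1-X^2+Y^2)^2+4*X^2*Y^2 = B^2 + (2*X*Y)^2 by rw [hB]; ring]
    rw [show (B + 2*X*Y)/2 = Real.sqrt (((B+2*X*Y)/2)^2) from (Real.sqrt_sq (by linarith)).symm]
    apply Real.sqrt_le_sqrt; nlinarith [sq_nonneg (B - 2*X*Y)]
  have hL0 : 0 ≤ L := le_trans hB0 hL1
  -- Y ≤ 3 L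
  have hYL : Y ≤ 3*L := by
    rcases le_or_gt (1/2 : ℝ) X with hx2 | hx2
    · nlinarith
    · nlinarith
  -- L ≤ 3((1-X)+Y)
  have hL4 : L ≤ 3*((1-X)+Y) := by nlinarith
  set D : ℝ := (1+X^2-Y^2)^2+4*X^2*Y^2 - 2*(1+X^2+Y^2)*X with hD
  constructor
  · -- lower bound
    have hmax0 : 0 ≤ max D 0 := le_max_right _ _
    have hkey : (1-X^2-Y^2)*(1-X) ≤ 2*(1-X^2-Y^2)*Y + 4 * max D 0 := by
      rcases le_or_gt (1-X) (2*Y) with hc | hc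
      · nlinarith
      · have hP2 : (1/4)*(1-X^2-Y^2)*(1-X) ≤ D := by
          rw [hD]
          have h1 : 4*Y^2 ≤ (1-X)^2 := by nlinarith
          nlinarith [sq_nonneg (X - 1/8), sq_nonneg Y, sq_nonneg (Y*(X-1/2)),
            mul_nonneg (mul_nonneg hY hY) hY, sq_nonneg (X-1/2),
            mul_nonneg (sq_nonneg Y) hX, sq_nonneg (Y^2),
            mul_le_mul_of_nonneg_right h1 (sq_nonneg (X-1/2))]
        have : (1/4)*(1-X^2-Y^2)*(1-X) ≤ max D 0 := le_trans hP2 (le_max_left _ _)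
        nlinarith
    nlinarith [mul_le_mul_of_nonneg_left hL4 hρ.le]
  · -- upper bound
    have hP1 : D ≤ 2*(1-X^2-Y^2)*B := by
      rw [hD, hB]
      nlinarith [sq_nonneg (1-X), sq_nonneg Y, sq_nonneg (X*Y), sq_nonneg (1-X^2-Y^2),
        mul_nonneg hX hY, sq_nonneg (Y^2 - (1-X))]
    have hmaxle : max D 0 ≤ 2*(1-X^2-Y^2)*B := by
      rw [max_le_iff]; exact ⟨hP1, by positivity⟩
    have hBL : (1-X^2-Y^2)*B ≤ (1-X^2-Y^2)*L := mul_le_mul_of_nonneg_left hL1 hρ.le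
    nlinarith [mul_le_mul_of_nonneg_left hYL hρ.le]

/-- Distortion from the disc to `ℂ ∖ E_m`: with `λ = ψ(z) = -2mz/(1+z²)`,
`1 - |u(z)| ≈ d(λ, E_m) / ((|λ+m|·|λ-m|)^{1/2}(1+|λ|))`. -/
theorem stmt6 (m : ℝ) (hm : 0 < m) (zb : ℂ) (hzb : ‖zb‖ < 1) (θ : ℝ)
    (u : ℂ → ℂ)
    (hu : ∀ z : ℂ, u z = Complex.exp (θ * Complex.I) * (z - zb) / (1 - (starRingEnd ℂ) zb * z)) :
    ∃ C₁ > 0, ∃ C₂ > 0, ∀ z ∈ ball (0 : ℂ) 1, ∀ w : ℂ, w = -2 * m * z / (1 + z ^ 2) →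
      C₁ * (infDist w (diracSpectrum m) /
          (Real.sqrt (‖w + m‖ * ‖w - m‖) * (1 + ‖w‖))) ≤
        1 - ‖u z‖ ∧
      1 - ‖u z‖ ≤
        C₂ * (infDist w (diracSpectrum m) /
          (Real.sqrt (‖w + m‖ * ‖w - m‖) * (1 + ‖w‖))) := by
  set κ : ℝ := min (3/4) m with hκ
  have hκ0 : 0 < κ := lt_min (by norm_num) hm
  have hzbsq : 0 < 1 - Complex.normSq zb := by
    have := Complex.sq_norm zb; nlinarith [norm_nonneg zb]
  have hzbabs : 0 < 1 - ‖zb‖ := by linarith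
  refine ⟨κ * (1 - Complex.normSq zb) / 64,
    div_pos (mul_pos hκ0 hzbsq) (by norm_num), ?_⟩
  refine ⟨96 * (1 + m) / (1 - ‖zb‖),
    div_pos (by linarith) hzbabs, ?_⟩
  intro z hzball w hw
  have hz : ‖z‖ < 1 := by
    rw [mem_ball, Complex.dist_eq, sub_zero] at hzball; exact hzball
  -- basic notation
  set X : ℝ := |z.re| with hX
  set Y : ℝ := |z.im| with hY
  have hX0 : 0 ≤ X := abs_nonneg _
  have hY0 : 0 ≤ Y := abs_nonneg _
  have hXsq : X^2 = z.re^2 := sq_abs _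
  have hYsq : Y^2 = z.im^2 := sq_abs _
  have hnsz : Complex.normSq z = X^2 + Y^2 := by
    rw [hXsq, hYsq, Complex.normSq_apply]; ring
  have hrr : ‖z‖ ^ 2 = X^2 + Y^2 := by rw [Complex.sq_norm, hnsz]
  have hr1 : X^2 + Y^2 < 1 := by nlinarith [norm_nonneg z]
  set ρ : ℝ := 1 - X^2 - Y^2 with hρdef
  have hρ : 0 < ρ := by rw [hρdef]; linarith
  -- nonvanishing of 1 + z^2
  have h1z : (1 + z^2) ≠ 0 := by
    intro h
    have hz2 : z^2 = -1 := by linear_combination h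
    have : ‖z^2‖ = 1 := by rw [hz2]; simp
    rw [norm_pow] at this
    nlinarith [norm_nonneg z]
  have h1z' : (1 - z^2) ≠ 0 := by
    intro h
    have hz2 : z^2 = 1 := by linear_combination -h
    have : ‖z^2‖ = 1 := by rw [hz2]; simp
    rw [norm_pow] at this
    nlinarith [norm_nonneg z]
  -- components of 1 ± z^2
  have hre1 : (1 + z^2).re = 1 + z.re^2 - z.im^2 := by
    rw [pow_two]; simp [Complex.mul_re]; ring
  have him1 : (1 + z^2).im = 2*z.re*z.im := by
    rw [pow_two]; simp [Complex.mul_im]; ring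
  set A2 : ℝ := (1+X^2-Y^2)^2 + 4*X^2*Y^2 with hA2def
  have hnorm1z : Complex.normSq (1 + z^2) = A2 := by
    rw [Complex.normSq_apply, hre1, him1, hA2def, hXsq, hYsq]; ring
  have hA2pos : 0 < A2 := by
    rw [← hnorm1z]
    exact Complex.normSq_pos.mpr h1z
  set A : ℝ := ‖1 + z^2‖ with hA
  have hApos : 0 < A := norm_pos_iff.mpr h1z
  have hAsq : A^2 = A2 := by rw [hA, Complex.sq_norm, hnorm1z]
  set Lc : ℝ := ‖1 - z^2‖ with hLc
  have hLpos : 0 < Lc := norm_pos_iff.mpr h1z'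
  have hLcsqrt : Lc = Real.sqrt ((1-X^2+Y^2)^2 + 4*X^2*Y^2) := by
    rw [hLc, Complex.norm_def]
    congr 1
    have hre2 : (1 - z^2).re = 1 - z.re^2 + z.im^2 := by
      rw [pow_two]; simp [Complex.mul_re]; ring
    have him2 : (1 - z^2).im = -(2*z.re*z.im) := by
      rw [pow_two]; simp [Complex.mul_im]; ring
    rw [Complex.normSq_apply, hre2, him2, hXsq, hYsq]; ring
  -- w components
  have hwre : w.re = -(2*m*(1+X^2+Y^2)) / A2 * z.re := by
    rw [hw, Complex.div_re, hnorm1z, hre1, him1]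
    have e1 : (-2 * (m:ℂ) * z).re = -2*m*z.re := by simp [Complex.mul_re]
    have e2 : (-2 * (m:ℂ) * z).im = -2*m*z.im := by simp [Complex.mul_im]
    rw [e1, e2, hXsq, hYsq]
    field_simp
    ring
  have hwim : w.im = -(2*m*ρ) / A2 * z.im := by
    rw [hw, Complex.div_im, hnorm1z, hre1, him1]
    have e1 : (-2 * (m:ℂ) * z).re = -2*m*z.re := by simp [Complex.mul_re]
    have e2 : (-2 * (m:ℂ) * z).im = -2*m*z.im := by simp [Complex.mul_im]
    rw [e1, e2, hρdef, hXsq, hYsq]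
    field_simp
    ring
  have hwimabs : |w.im| = 2*m*ρ/A2 * Y := by
    rw [hwim, abs_mul, hY, abs_div, abs_neg]
    rw [abs_of_pos (by positivity : (0:ℝ) < 2*m*ρ), abs_of_pos hA2pos]
  have hwreabs : |w.re| = 2*m*(1+X^2+Y^2)/A2 * X := by
    rw [hwre, abs_mul, hX, abs_div, abs_neg]
    rw [abs_of_pos (by positivity : (0:ℝ) < 2*m*(1+X^2+Y^2)), abs_of_pos hA2pos]
  set DD : ℝ := A2 - 2*(1+X^2+Y^2)*X with hDD
  have hwrem : m - |w.re| = m/A2 * DD := by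
    rw [hwreabs, hDD]; field_simp
  have hmax : max (m - |w.re|) 0 = m/A2 * max DD 0 := by
    rw [hwrem, show (0:ℝ) = m/A2 * 0 by ring]
    rw [show m/A2 * DD ⊔ m/A2 * 0 = m/A2 * (DD ⊔ 0) from
      (mul_max_of_nonneg _ _ (by positivity)).symm]
    norm_num
  set N : ℝ := 2*ρ*Y + max DD 0 with hN
  have hM : |w.im| + max (m - |w.re|) 0 = m/A2 * N := by
    rw [hwimabs, hmax, hN]; field_simp
  -- infDist bounds
  obtain ⟨hd1, hd2⟩ := aux_dist m hm w
  rw [hM] at hd1 hd2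
  set d : ℝ := infDist w (diracSpectrum m) with hd
  -- core inequality
  obtain ⟨hc1, hc2⟩ := aux_core X Y Lc hX0 hY0 hr1 hLcsqrt
  rw [← hρdef, ← hA2def, ← hDD, ← hN] at hc1 hc2
  -- |w| and the G quantity
  set rr : ℝ := ‖z‖ with hrrdef
  have hrr0 : 0 ≤ rr := norm_nonneg _
  have hrr1 : rr < 1 := hz
  have habsw : ‖w‖ = 2*m*rr/A := by
    rw [hw]
    rw [show (-2 * (m:ℂ) * z) / (1 + z^2) = (((-2*m : ℝ)):ℂ) * z / (1+z^2) by push_cast; ring]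
    rw [norm_div, norm_mul, Complex.norm_real, Real.norm_eq_abs, abs_of_neg (by linarith : (-2)*m < 0)]
    rw [← hA, ← hrrdef]; ring
  have hprod : (w + m) * (w - m) = -((m:ℂ))^2 * (1-z^2)^2 / (1+z^2)^2 := by
    rw [hw]; field_simp; ring
  have habsprod : ‖w + m‖ * ‖w - m‖ = m^2 * Lc^2 / A2 := by
    rw [← norm_mul, hprod, norm_div, norm_mul, norm_pow, norm_pow]
    rw [← hLc, ← hA, hAsq]
    congr 2
    simp [Complex.norm_real, abs_of_pos hm]
  have hsqrtprod : Real.sqrt (‖w + m‖ * ‖w - m‖) = m * Lc / A := by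
    rw [habsprod, ← hAsq, show m^2*Lc^2/A^2 = (m*Lc/A)^2 by rw [div_pow]; ring]
    exact Real.sqrt_sq (by positivity)
  have h1absw : 1 + ‖w‖ = (A + 2*m*rr)/A := by
    rw [habsw]; field_simp
  set S : ℝ := A + 2*m*rr with hSdef
  have hAle : A ≤ 1 + rr^2 := by
    calc A ≤ ‖1‖ + ‖z^2‖ := norm_add_le _ _
      _ = 1 + rr^2 := by rw [norm_pow, ← hrrdef]; simp
  have hAge : 1 - rr^2 ≤ A := by
    have t : ‖(1:ℂ)‖ ≤ ‖1+z^2‖ + ‖-(z^2)‖ := by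
      have := norm_add_le (1+z^2) (-(z^2))
      simpa using this
    simp only [norm_one, norm_neg, norm_pow] at t
    rw [← hrrdef, ← hA] at t
    linarith
  have hrrsq : rr^2 ≤ 1 := by
    have := mul_le_mul hrr1.le hrr1.le hrr0 (by norm_num : (0:ℝ) ≤ 1)
    rw [pow_two]; linarith
  have hSub : S ≤ 2 + 2*m := by
    have h1 : 2*m*rr ≤ 2*m*1 := mul_le_mul_of_nonneg_left hrr1.le (by linarith)
    rw [hSdef]; linarith
  have hSlb : κ ≤ S := by
    rcases le_or_gt (1/2 : ℝ) rr with hc | hc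
    · have h1 : 2*m*(1/2) ≤ 2*m*rr := mul_le_mul_of_nonneg_left hc (by linarith)
      have h2 : κ ≤ m := min_le_right _ _
      rw [hSdef]; linarith
    · have h0 : rr*rr ≤ (1/2)*(1/2) := mul_le_mul hc.le hc.le hrr0 (by norm_num)
      have h1 : (3/4 : ℝ) ≤ 1 - rr^2 := by rw [pow_two]; linarith
      have h2 : κ ≤ 3/4 := min_le_left _ _
      have h3 : 0 ≤ 2*m*rr := by positivity
      rw [hSdef]; linarith
  set G : ℝ := Real.sqrt (‖w + m‖ * ‖w - m‖) * (1 + ‖w‖)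
    with hGdef
  have hG : G = m * Lc * S / A2 := by
    rw [hGdef, hsqrtprod, h1absw, ← hAsq, hSdef]
    field_simp
  have hGpos : 0 < G := by rw [hG]; positivity
  -- two-sided bound on d / G
  have hlow : ρ / (48*(1+m)) ≤ d / G := by
    rw [le_div_iff₀ hGpos, hG]
    calc ρ / (48*(1+m)) * (m * Lc * S / A2)
        ≤ ρ / (48*(1+m)) * (m * Lc * (2+2*m) / A2) := by
          gcongr
      _ = m * (ρ * Lc / 12) / A2 / 2 := by field_simp; ring
      _ ≤ m * N / A2 / 2 := by gcongr
      _ = m / A2 * N / 2 := by ring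
      _ ≤ d := hd1
  have hhigh : d / G ≤ 8 * ρ / κ := by
    rw [div_le_iff₀ hGpos, hG]
    calc d ≤ m / A2 * N := hd2
      _ ≤ m / A2 * (8 * (ρ * Lc)) := by gcongr
      _ = 8 * ρ / κ * (m * Lc * κ / A2) := by field_simp
      _ ≤ 8 * ρ / κ * (m * Lc * S / A2) := by gcongr
  -- bounds for the automorphism factor
  obtain ⟨hu1, hu2⟩ := aux_u zb z hzb hz θ
  rw [← hu z] at hu1 hu2
  have hρz : 1 - Complex.normSq z = ρ := by rw [hnsz, hρdef]; ring
  rw [hρz] at hu1 hu2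
  constructor
  · calc κ * (1 - Complex.normSq zb) / 64 * (d / G)
        ≤ κ * (1 - Complex.normSq zb) / 64 * (8 * ρ / κ) := by gcongr
      _ = (1 - Complex.normSq zb) * ρ / 8 := by field_simp; ring
      _ ≤ 1 - ‖u z‖ := hu1
  · calc 1 - ‖u z‖ ≤ 2 * ρ / (1 - ‖zb‖) := hu2
      _ = 96 * (1 + m) / (1 - ‖zb‖) * (ρ / (48*(1+m))) := by field_simp; ring
      _ ≤ 96 * (1 + m) / (1 - ‖zb‖) * (d / G) := by gcongr
end

section
/- Let d ≥ 1 be an integer and let p > d be real. Then there exists a constant K > 0, depending only on d and p, such that for every λ ∈ ℂ with Im(λ) > 0: ∫_0^{+∞} r^{d−1} / |r − λ|^p dr ≤ K · |λ|^{d−1} / (Im λ)^{p−1}. (Here Im(λ) = d(λ, ℝ) is the distance from λ to the real axis, which is the spectrum of the free massless Dirac operator D_0.) -/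
open MeasureTheory Set
open scoped ENNReal

lemma lint_neg (F : ℝ → ℝ≥0∞) : ∫⁻ x, F (-x) = ∫⁻ x, F x := by
  have := lintegral_map_equiv (μ := (volume : Measure ℝ)) F (MeasurableEquiv.neg ℝ)
  rw [show ⇑(MeasurableEquiv.neg ℝ) = (Neg.neg : ℝ → ℝ) from rfl] at this
  rw [Measure.map_neg_eq_self] at this
  exact this.symm

lemma lint_shift (g : ℝ → ℝ≥0∞) (c a : ℝ) :
    ∫⁻ r in Ioi c, g (r - a) = ∫⁻ r in Ioi (c - a), g r := by
  rw [← lintegral_indicator measurableSet_Ioi, ← lintegral_indicator measurableSet_Ioi]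
  rw [← lintegral_sub_right_eq_self (fun r => (Ioi (c - a)).indicator g r) a]
  congr 1 with x
  rw [Set.indicator_apply, Set.indicator_apply]
  simp only [mem_Ioi, sub_lt_sub_iff_right]

lemma lint_reflect (g : ℝ → ℝ≥0∞) (t a : ℝ) :
    ∫⁻ r in Iio t, g (a - r) = ∫⁻ r in Ioi (a - t), g r := by
  rw [← lintegral_indicator measurableSet_Iio, ← lintegral_indicator measurableSet_Ioi]
  have h1 : ∀ x : ℝ, (Iio t).indicator (fun r => g (a - r)) x
      = (fun y => (Ioi (a - t)).indicator g (a + y)) (-x) := by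
    intro x
    simp only [Set.indicator_apply, mem_Iio, mem_Ioi, ← sub_eq_add_neg, sub_lt_sub_iff_left]
  simp_rw [h1]
  rw [lint_neg (fun y => (Ioi (a - t)).indicator g (a + y))]
  exact lintegral_add_left_eq_self _ a

lemma lint_base {s c : ℝ} (hs : s < -1) (hc : 0 < c) :
    ∫⁻ r in Ioi c, ENNReal.ofReal (r ^ s) = ENNReal.ofReal (c ^ (s + 1) / (-(s + 1))) := by
  rw [← ofReal_integral_eq_lintegral_ofReal (integrableOn_Ioi_rpow_of_lt hs hc)]
  · rw [integral_Ioi_rpow_of_lt hs hc]; rw [div_neg, neg_div]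
  · filter_upwards [ae_restrict_mem measurableSet_Ioi] with x hx
    exact Real.rpow_nonneg (le_of_lt (hc.trans hx)) s

/-- Radial resolvent integral bound for the massless Dirac operator: for `Im λ > 0`,
`∫_0^∞ r^{d-1} / |r - λ|^p dr ≤ K · |λ|^{d-1} / (Im λ)^{p-1}`. -/
theorem stmt12 (d : ℕ) (hd : 1 ≤ d) (p : ℝ) (hp : (d : ℝ) < p) :
    ∃ K > 0, ∀ w : ℂ, 0 < w.im →
      (∫⁻ r in Set.Ioi (0 : ℝ),
          ENNReal.ofReal (r ^ (d - 1) / ‖(r : ℂ) - w‖ ^ p))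
        ≤ ENNReal.ofReal (K * ‖w‖ ^ (d - 1) / w.im ^ (p - 1)) := by
  have hd1 : (1:ℝ) ≤ (d:ℝ) := by exact_mod_cast hd
  have hp1 : (1:ℝ) < p := lt_of_le_of_lt hd1 hp
  have hp0 : 0 ≤ p := by linarith
  have hpd : (0:ℝ) < p - d := by linarith
  have hcast : ((d - 1 : ℕ) : ℝ) = (d:ℝ) - 1 := by
    push_cast [Nat.cast_sub hd]; ring
  have hKpos : 0 < (2:ℝ)^(d-1) * (2 + 2/(p-1) + (2:ℝ)^p/(p-(d:ℝ))) := by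
    apply mul_pos (by positivity)
    have h2 : 0 < 2/(p-1) := div_pos two_pos (by linarith)
    have h3 : 0 < (2:ℝ)^p/(p-(d:ℝ)) := div_pos (Real.rpow_pos_of_pos two_pos p) hpd
    linarith
  refine ⟨(2:ℝ)^(d-1) * (2 + 2/(p-1) + (2:ℝ)^p/(p-(d:ℝ))), hKpos, ?_⟩
  intro w hb
  have hw0 : w ≠ 0 := by intro h; rw [h] at hb; simp at hb
  have hM0 : 0 < ‖w‖ := norm_pos_iff.mpr hw0
  set a : ℝ := w.re with ha_def
  set b : ℝ := w.im with hb_def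
  set M : ℝ := ‖w‖ with hM_def
  have hM : 0 < M := hM0
  have hbM : b ≤ M := le_trans (le_abs_self _) (Complex.abs_im_le_norm w)
  have habs_im : ∀ r : ℝ, b ≤ ‖(r:ℂ) - w‖ := by
    intro r
    have h1 := Complex.abs_im_le_norm ((r:ℂ) - w)
    have h2 : ((r:ℂ) - w).im = -b := by simp [hb_def]
    rw [h2, abs_neg, abs_of_pos hb] at h1
    exact h1
  have habs_pos : ∀ r : ℝ, 0 < ‖(r:ℂ) - w‖ := fun r => lt_of_lt_of_le hb (habs_im r)
  have habs_re : ∀ r : ℝ, |r - a| ≤ ‖(r:ℂ) - w‖ := by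
    intro r
    have h1 := Complex.abs_re_le_norm ((r:ℂ) - w)
    have h2 : ((r:ℂ) - w).re = r - a := by simp [ha_def]
    rwa [h2] at h1
  set C : ℝ := (2*M)^(d-1) with hC_def
  have hC : 0 < C := by positivity
  set S1 : Set ℝ := Ioc 0 (2*M) ∩ Icc (a - b) (a + b) with hS1_def
  set S2 : Set ℝ := Ioc 0 (2*M) ∩ (Icc (a - b) (a + b))ᶜ with hS2_def
  set S3 : Set ℝ := Ioi (2*M) with hS3_def
  have hS1m : MeasurableSet S1 := measurableSet_Ioc.inter measurableSet_Icc
  have hS2m : MeasurableSet S2 := measurableSet_Ioc.inter measurableSet_Icc.compl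
  set f : ℝ → ℝ≥0∞ :=
    fun r => ENNReal.ofReal (r ^ (d - 1) / ‖(r : ℂ) - w‖ ^ p) with hf_def
  have cover : Ioi (0:ℝ) ⊆ (S1 ∪ S2) ∪ S3 := by
    intro r hr
    rcases le_or_gt r (2*M) with h | h
    · by_cases h2 : r ∈ Icc (a - b) (a + b)
      · exact Or.inl (Or.inl ⟨⟨hr, h⟩, h2⟩)
      · exact Or.inl (Or.inr ⟨⟨hr, h⟩, h2⟩)
    · exact Or.inr h
  -- values
  set A1 : ℝ := 2 * C * b^(1-p) with hA1_def
  set A2 : ℝ := (2/(p-1)) * C * b^(1-p) with hA2_def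
  set A3 : ℝ := ((2:ℝ)^p/(p-(d:ℝ))) * C * b^(1-p) with hA3_def
  have hb1p : (0:ℝ) < b^(1-p) := Real.rpow_pos_of_pos hb _
  -- Bound on S1
  have bound1 : ∫⁻ r in S1, f r ≤ ENNReal.ofReal A1 := by
    have step : ∫⁻ r in S1, f r ≤ ∫⁻ _ in S1, ENNReal.ofReal (C / b^p) := by
      apply setLIntegral_mono' hS1m
      intro r hr
      apply ENNReal.ofReal_le_ofReal
      apply div_le_div₀ hC.le
      · exact pow_le_pow_left₀ hr.1.1.le hr.1.2 _
      · exact Real.rpow_pos_of_pos hb p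
      · exact Real.rpow_le_rpow hb.le (habs_im r) hp0
    refine le_trans step ?_
    rw [setLIntegral_const]
    have hvol : volume S1 ≤ ENNReal.ofReal (2*b) := by
      refine le_trans (measure_mono (inter_subset_right)) ?_
      rw [Real.volume_Icc]
      apply ENNReal.ofReal_le_ofReal; ring_nf; linarith
    calc ENNReal.ofReal (C / b^p) * volume S1
        ≤ ENNReal.ofReal (C / b^p) * ENNReal.ofReal (2*b) := by
          exact mul_le_mul_right hvol _
      _ = ENNReal.ofReal (C / b^p * (2*b)) := by
          rw [← ENNReal.ofReal_mul (by positivity)]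
      _ = ENNReal.ofReal A1 := by
          congr 1
          rw [hA1_def, Real.rpow_sub hb, Real.rpow_one]
          field_simp
  -- Bound on S2
  have bound2 : ∫⁻ r in S2, f r ≤ ENNReal.ofReal A2 := by
    set g : ℝ → ℝ≥0∞ := fun s => ENNReal.ofReal (C * s^(-p)) with hg_def
    have hS2abs : ∀ r ∈ S2, b < |r - a| := by
      intro r hr
      have h := hr.2
      simp only [mem_compl_iff, mem_Icc, not_and_or, not_le] at h
      rcases h with h | h
      · rw [abs_sub_comm, abs_of_pos (by linarith)]; linarith
      · rw [abs_of_pos (by linarith)]; linarith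
    have step : ∫⁻ r in S2, f r ≤ ∫⁻ r in S2, ENNReal.ofReal (C * |r - a| ^ (-p)) := by
      apply setLIntegral_mono' hS2m
      intro r hr
      have habs : b < |r - a| := hS2abs r hr
      apply ENNReal.ofReal_le_ofReal
      rw [Real.rpow_neg (abs_nonneg _), ← div_eq_mul_inv]
      apply div_le_div₀ hC.le
      · exact pow_le_pow_left₀ hr.1.1.le hr.1.2 _
      · exact Real.rpow_pos_of_pos (by linarith) p
      · exact Real.rpow_le_rpow (abs_nonneg _) (habs_re r) hp0
    refine le_trans step ?_
    have hsub : S2 ⊆ Iio (a - b) ∪ Ioi (a + b) := by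
      intro r hr
      have h := hr.2
      simp only [mem_compl_iff, mem_Icc, not_and_or, not_le] at h
      rcases h with h | h
      · exact Or.inl h
      · exact Or.inr h
    refine le_trans (lintegral_mono_set hsub) ?_
    refine le_trans (lintegral_union_le _ _ _) ?_
    have hval : ∫⁻ s in Ioi b, g s = ENNReal.ofReal (C * (b^(1-p)/(p-1))) := by
      rw [hg_def]
      simp_rw [ENNReal.ofReal_mul hC.le]
      rw [lintegral_const_mul' _ _ ENNReal.ofReal_ne_top]
      rw [lint_base (by linarith : -p < -1) hb]
      rw [← ENNReal.ofReal_mul hC.le]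
      rw [show -p + 1 = 1 - p by ring, neg_sub]
      rw [ENNReal.ofReal_mul hC.le]
    have hIio : ∫⁻ r in Iio (a - b), ENNReal.ofReal (C * |r - a| ^ (-p))
        = ENNReal.ofReal (C * (b^(1-p)/(p-1))) := by
      rw [← hval]
      have hcongr : ∫⁻ r in Iio (a - b), ENNReal.ofReal (C * |r - a| ^ (-p))
          = ∫⁻ r in Iio (a - b), g (a - r) := by
        apply setLIntegral_congr_fun measurableSet_Iio
        intro r hr
        rw [hg_def]
        beta_reduce
        congr 2
        rw [abs_sub_comm, abs_of_pos (by simp only [mem_Iio] at hr; linarith)]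
      rw [hcongr, lint_reflect g (a - b) a]
      congr 1
      ring
    have hIoi : ∫⁻ r in Ioi (a + b), ENNReal.ofReal (C * |r - a| ^ (-p))
        = ENNReal.ofReal (C * (b^(1-p)/(p-1))) := by
      rw [← hval]
      have hcongr : ∫⁻ r in Ioi (a + b), ENNReal.ofReal (C * |r - a| ^ (-p))
          = ∫⁻ r in Ioi (a + b), g (r - a) := by
        apply setLIntegral_congr_fun measurableSet_Ioi
        intro r hr
        rw [hg_def]
        beta_reduce
        congr 2
        rw [abs_of_pos (by simp only [mem_Ioi] at hr; linarith)]
      rw [hcongr, lint_shift g (a + b) a]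
      congr 1
      ring
    have hnn : 0 ≤ C * (b^(1-p)/(p-1)) :=
      mul_nonneg hC.le (div_nonneg hb1p.le (by linarith))
    rw [hIio, hIoi, ← ENNReal.ofReal_add hnn hnn]
    apply ENNReal.ofReal_le_ofReal
    rw [hA2_def]
    apply le_of_eq
    field_simp
    ring
  -- Bound on S3
  have bound3 : ∫⁻ r in S3, f r ≤ ENNReal.ofReal A3 := by
    have step : ∫⁻ r in S3, f r
        ≤ ∫⁻ r in S3, ENNReal.ofReal ((2:ℝ)^p * r ^ ((d:ℝ) - 1 - p)) := by
      apply setLIntegral_mono' measurableSet_Ioi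
      intro r hr
      simp only [hS3_def, mem_Ioi] at hr
      have hr0 : 0 < r := by linarith
      have habs2 : r / 2 ≤ ‖(r:ℂ) - w‖ := by
        have h1 := norm_sub_norm_le (r:ℂ) w
        simp only [Complex.norm_real, Real.norm_eq_abs] at h1
        rw [abs_of_pos hr0] at h1
        linarith
      apply ENNReal.ofReal_le_ofReal
      have hnum : (r:ℝ) ^ (d - 1) = r ^ ((d:ℝ) - 1) := by
        rw [← hcast, Real.rpow_natCast]
      calc r ^ (d - 1) / ‖(r:ℂ) - w‖ ^ p
          ≤ r ^ (d - 1) / (r/2) ^ p := by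
            apply div_le_div_of_nonneg_left (by positivity)
              (Real.rpow_pos_of_pos (by linarith) p)
              (Real.rpow_le_rpow (by linarith) habs2 hp0)
        _ = (2:ℝ)^p * r ^ ((d:ℝ) - 1 - p) := by
            rw [Real.div_rpow hr0.le (by norm_num : (0:ℝ) ≤ 2), hnum,
              Real.rpow_sub hr0 ((d:ℝ) - 1) p]
            field_simp
    refine le_trans step ?_
    have heq : ∫⁻ r in S3, ENNReal.ofReal ((2:ℝ)^p * r ^ ((d:ℝ) - 1 - p))
        = ENNReal.ofReal ((2:ℝ)^p * ((2*M) ^ ((d:ℝ) - p)/(p - (d:ℝ)))) := by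
      simp_rw [ENNReal.ofReal_mul (Real.rpow_nonneg (by norm_num : (0:ℝ) ≤ 2) p)]
      rw [lintegral_const_mul' _ _ ENNReal.ofReal_ne_top]
      rw [hS3_def, lint_base (by linarith : (d:ℝ) - 1 - p < -1) (by linarith : 0 < 2*M)]
      rw [← ENNReal.ofReal_mul (Real.rpow_nonneg (by norm_num : (0:ℝ) ≤ 2) p)]
      rw [show (d:ℝ) - 1 - p + 1 = (d:ℝ) - p by ring]
      rw [show -((d:ℝ) - p) = p - (d:ℝ) by ring]
      rw [ENNReal.ofReal_mul (Real.rpow_nonneg (by norm_num : (0:ℝ) ≤ 2) p)]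
    rw [heq]
    apply ENNReal.ofReal_le_ofReal
    have hsplit : (2*M) ^ ((d:ℝ) - p) = (2*M) ^ ((d:ℝ) - 1) * (2*M) ^ (1 - p) := by
      rw [← Real.rpow_add (by linarith : 0 < 2*M)]; ring_nf
    have hmono : (2*M) ^ (1 - p) ≤ b ^ (1 - p) :=
      Real.rpow_le_rpow_of_nonpos hb (by linarith) (by linarith)
    have hCC : (2*M) ^ ((d:ℝ) - 1) = C := by
      rw [hC_def, ← hcast, Real.rpow_natCast]
    rw [hA3_def, hsplit, hCC]
    calc (2:ℝ)^p * (C * (2*M)^(1-p) / (p - (d:ℝ)))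
        ≤ (2:ℝ)^p * (C * b^(1-p) / (p - (d:ℝ))) := by
          apply mul_le_mul_of_nonneg_left _ (Real.rpow_nonneg (by norm_num) p)
          apply (div_le_div_iff_of_pos_right hpd).mpr
          exact mul_le_mul_of_nonneg_left hmono hC.le
      _ = (2:ℝ)^p/(p-(d:ℝ)) * C * b^(1-p) := by ring
  -- Combine
  calc ∫⁻ r in Set.Ioi (0:ℝ), f r
      ≤ ∫⁻ r in (S1 ∪ S2) ∪ S3, f r := lintegral_mono_set cover
    _ ≤ ((∫⁻ r in S1, f r) + ∫⁻ r in S2, f r) + ∫⁻ r in S3, f r := by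
        refine le_trans (lintegral_union_le _ _ _) ?_
        exact add_le_add_left (lintegral_union_le _ _ _) _
    _ ≤ (ENNReal.ofReal A1 + ENNReal.ofReal A2) + ENNReal.ofReal A3 :=
        add_le_add (add_le_add bound1 bound2) bound3
    _ = ENNReal.ofReal (A1 + A2 + A3) := by
        have hA1n : 0 ≤ A1 := by positivity
        have hA2n : 0 ≤ A2 :=
          mul_nonneg (mul_nonneg (div_nonneg (by norm_num) (by linarith)) hC.le) hb1p.le
        have hA3n : 0 ≤ A3 := mul_nonneg (mul_nonneg
          (div_nonneg (Real.rpow_nonneg (by norm_num) p) hpd.le) hC.le) hb1p.le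
        rw [← ENNReal.ofReal_add hA1n hA2n, ← ENNReal.ofReal_add (by linarith) hA3n]
    _ ≤ ENNReal.ofReal ((2:ℝ)^(d-1) * (2 + 2/(p-1) + (2:ℝ)^p/(p-(d:ℝ)))
          * ‖w‖ ^ (d - 1) / w.im ^ (p - 1)) := by
        apply ENNReal.ofReal_le_ofReal
        apply le_of_eq
        rw [hA1_def, hA2_def, hA3_def, hC_def, ← hb_def, ← hM_def]
        rw [show (1:ℝ) - p = -(p-1) by ring, Real.rpow_neg hb.le, mul_pow]
        have h1 : p - 1 ≠ 0 := by linarith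
        have h2 : p - (d:ℝ) ≠ 0 := by linarith
        have h3 : b ^ (p-1) ≠ 0 := (Real.rpow_pos_of_pos hb _).ne'
        field_simp
end
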